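/- arXiv:2311.02137 — 8 statements merged into one kernel-verified Lean document; each statement's English description precedes it below -/
import Mathlib

section
/- Let p be a prime and G = (ℤ/pℤ) × (ℤ/pℤ). Then G has exactly p+1 subgroups of order p, say C_p⁰, C_p¹, …, C_pᵖ, and there is an isomorphism of ℚ[G]-modules ℚ[G/{e}] ⊕ ℚ[G/G]^{⊕p} ≅ ⊕_{i=0}^{p} ℚ[G/C_pⁱ]; that is, {e} + p·(C_p×C_p) − ∑_{i=0}^{p} C_pⁱ is a Brauer relation for C_p × C_p. -/
/-!
Every `g ≠ 1` of `G ≅ C_p × C_p` generates an order-`p` subgroup, and it lies in no other one, so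
double counting the pairs `g ∈ H` gives `p + 1` such subgroups and
`∑_H ∑_{h ∈ H} φ h = p φ(1) + ∑_g φ g`. Take the map `k[G] ⊕ k[G/G]^p → ⊕_H k[G/H]` that projects
`k[G]` onto each `k[G/H]` and sends the `i`-th trivial summand to the constants of `k[G/Hᵢ]`, for
all but one of the subgroups `H₀, …, H_p`. Summing the coset sums of a kernel element `(f, c)`
over all `H` gives `p f(x) + const = 0`, so `f` is constant; its projection to `k[G/H₀]` is then
`p f(1) = 0`, and `c = 0` follows. Both sides have dimension `p² + p`.
-/

open Finsupp

section Permutation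

variable {k G X Y : Type*} [CommSemiring k] [Group G] [MulAction G X] [MulAction G Y]

lemma Finsupp.mapDomain_ofMulAction (q : X →[G] Y) (g : G) (f : X →₀ k) :
    mapDomain q (Representation.ofMulAction k G X g (MonoidAlgebra.ofCoeff f)).coeff =
      (Representation.ofMulAction k G Y g (MonoidAlgebra.ofCoeff (mapDomain q f))).coeff := by
  change mapDomain q (mapDomain _ f) = mapDomain _ (mapDomain q f)
  rw [← mapDomain_comp, ← mapDomain_comp]
  congr 1
  funext x
  exact map_smul q g x

lemma Finsupp.mapDomain_apply_eq_sum_filter [Fintype X] [DecidableEq Y] {M : Type*}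
    [AddCommMonoid M] (q : X → Y) (f : X →₀ M) (y : Y) :
    mapDomain q f y = ∑ x with q x = y, f x := by
  rw [mapDomain, sum_apply, sum_fintype _ _ (by simp), Finset.sum_filter]
  simp [single_apply]

variable (k) in
noncomputable def Finsupp.lcomapOfFinite [Finite X] (q : X → Y) : (Y →₀ k) →ₗ[k] (X →₀ k) :=
  (linearEquivFunOnFinite k k X).symm.toLinearMap ∘ₗ LinearMap.funLeft k k q ∘ₗ lcoeFun

@[simp]
lemma Finsupp.lcomapOfFinite_apply [Finite X] (q : X → Y) (c : Y →₀ k) (x : X) :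
    lcomapOfFinite k q c x = c (q x) := rfl

lemma Finsupp.lcomapOfFinite_injective [Finite X] {q : X → Y} (hq : q.Surjective) :
    Function.Injective (lcomapOfFinite k q) := by
  intro c d h
  ext y
  obtain ⟨x, rfl⟩ := hq y
  exact DFunLike.congr_fun h x

lemma Finsupp.lcomapOfFinite_ofMulAction [Finite X] (q : X →[G] Y) (g : G) (c : Y →₀ k) :
    lcomapOfFinite k q (Representation.ofMulAction k G Y g (MonoidAlgebra.ofCoeff c)).coeff =
      (Representation.ofMulAction k G X g
        (MonoidAlgebra.ofCoeff (lcomapOfFinite k q c))).coeff := by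
  ext x
  simp [Representation.coeff_ofMulAction, map_smul]

end Permutation

section Quotient

open QuotientGroup

variable {G : Type*} [Group G]

def QuotientGroup.mulActionHomOfLE {H K : Subgroup G} (h : H ≤ K) : G ⧸ H →[G] G ⧸ K where
  toFun := Subgroup.quotientMapOfLE h
  map_smul' _ x := Quotient.inductionOn' x fun _ => rfl

@[simp]
lemma QuotientGroup.mulActionHomOfLE_mk {H K : Subgroup G} (h : H ≤ K) (g : G) :
    mulActionHomOfLE h (g : G ⧸ H) = (g : G ⧸ K) := rfl

open scoped Classical in
lemma QuotientGroup.mapDomain_mulActionHomOfLE_bot_apply [Fintype G] {k : Type*} [Semiring k]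
    (H : Subgroup G) (f : G ⧸ (⊥ : Subgroup G) →₀ k) (x : G) :
    mapDomain (mulActionHomOfLE (bot_le : ⊥ ≤ H)) f (x : G ⧸ H) =
      ∑ h with h ∈ H, f ((x * h : G) : G ⧸ (⊥ : Subgroup G)) := by
  rw [mapDomain_apply_eq_sum_filter, Finset.sum_filter, Finset.sum_filter]
  refine (Fintype.sum_bijective (fun h : G => ((x * h : G) : G ⧸ (⊥ : Subgroup G)))
    ((quotientBot (G := G)).symm.bijective.comp (Group.mulLeft_bijective x))
    _ _ fun h => ?_).symm
  have hmem : mulActionHomOfLE (bot_le : ⊥ ≤ H) ((x * h : G) : G ⧸ (⊥ : Subgroup G)) = x ↔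
      h ∈ H := by
    rw [mulActionHomOfLE_mk, QuotientGroup.eq, mul_inv_rev, inv_mul_cancel_right, inv_mem_iff]
  simp only [hmem]

end Quotient

abbrev SubgroupsOfCard (G : Type*) [Group G] (n : ℕ) := {H : Subgroup G // Nat.card H = n}

section Counting

open Finset
open scoped Classical

variable {G : Type*} [Group G]

lemma Subgroup.card_filter_mem [Fintype G] (H : Subgroup G) : #{g | g ∈ H} = Nat.card H := by
  rw [← Fintype.card_subtype, Nat.card_eq_fintype_card]

variable {p : ℕ} [hp : Fact p.Prime]

lemma Subgroup.zpowers_eq_of_card_eq_prime {H : Subgroup G} (hH : Nat.card H = p) {g : G}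
    (hgH : g ∈ H) (hg : g ≠ 1) : zpowers g = H := by
  have : Finite H := Nat.finite_of_card_ne_zero (hH ▸ hp.out.ne_zero)
  have : orderOf (⟨g, hgH⟩ : H) = p :=
    orderOf_eq_prime (hH ▸ pow_card_eq_one') (by simpa [Subtype.ext_iff] using hg)
  refine eq_of_le_of_card_ge (zpowers_le.2 hgH) ?_
  rw [hH, Nat.card_zpowers, ← orderOf_mk g hgH, this]

variable [Fintype G] (hexp : ∀ g : G, g ^ p = 1)
include hexp

lemma card_subgroupsOfCard_mem_eq_one {g : G} (hg : g ≠ 1) :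
    #{H : SubgroupsOfCard G p | g ∈ H.1} = 1 := by
  have hcard : Nat.card (Subgroup.zpowers g) = p := by
    rw [Nat.card_zpowers, orderOf_eq_prime (hexp g) hg]
  refine card_eq_one.2 ⟨⟨_, hcard⟩, ?_⟩
  ext H
  simp only [mem_filter, mem_univ, true_and, mem_singleton, Subtype.ext_iff]
  exact ⟨fun hgH => (Subgroup.zpowers_eq_of_card_eq_prime H.2 hgH hg).symm,
    fun h => h ▸ Subgroup.mem_zpowers g⟩

lemma sum_subgroupsOfCard_sum_mem {M : Type*} [AddCommMonoid M] (φ : G → M) :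
    ∑ H : SubgroupsOfCard G p, ∑ g with g ∈ H.1, φ g =
      Nat.card (SubgroupsOfCard G p) • φ 1 + ∑ g ∈ univ.erase 1, φ g := by
  calc ∑ H : SubgroupsOfCard G p, ∑ g with g ∈ H.1, φ g
      = ∑ g, #{H : SubgroupsOfCard G p | g ∈ H.1} • φ g := by
        simp_rw [sum_filter]
        rw [Finset.sum_comm]
        simp_rw [← sum_filter, sum_const]
    _ = _ := by
        rw [← add_sum_erase _ _ (mem_univ 1)]
        congr 1
        · simp [Nat.card_eq_fintype_card]
        · exact sum_congr rfl fun g hg => by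
            rw [card_subgroupsOfCard_mem_eq_one hexp (ne_of_mem_erase hg), one_smul]

variable (hcard : Nat.card G = p ^ 2)
include hcard

theorem card_subgroupsOfCard_of_card_eq_sq : Nat.card (SubgroupsOfCard G p) = p + 1 := by
  have hH (H : SubgroupsOfCard G p) : #{g | g ∈ H.1} = p := H.1.card_filter_mem.trans H.2
  have h := sum_subgroupsOfCard_sum_mem hexp fun _ => (1 : ℤ)
  have hp1 : 1 ≤ p ^ 2 := Nat.one_le_pow _ _ hp.out.pos
  simp only [sum_const, hH, card_erase_of_mem (mem_univ _), card_univ,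
    ← Nat.card_eq_fintype_card, hcard, Nat.cast_sub hp1, nsmul_eq_mul, mul_one] at h
  have hp2 : (p : ℤ) - 1 ≠ 0 := by have := hp.out.two_le; omega
  have : ((Nat.card (SubgroupsOfCard G p) : ℤ) - (p + 1)) * (p - 1) = 0 := by
    push_cast at h
    linear_combination h
  have := (mul_eq_zero.1 this).resolve_right hp2
  omega

lemma sum_subgroupsOfCard_sum_mem_of_card_eq_sq {M : Type*} [AddCommMonoid M] (φ : G → M) :
    ∑ H : SubgroupsOfCard G p, ∑ g with g ∈ H.1, φ g = p • φ 1 + ∑ g, φ g := by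
  rw [sum_subgroupsOfCard_sum_mem hexp, card_subgroupsOfCard_of_card_eq_sq hexp hcard,
    ← add_sum_erase _ _ (mem_univ 1), succ_nsmul, add_assoc]

end Counting

section BrauerMap

open QuotientGroup

variable (k : Type*) [Field k] {G : Type*} [Group G] [Finite G] {p : ℕ}

/-- `(f, c) ↦ (π_H f + c_{σ H})_H`, where `π_H : k[G] → k[G/H]` is the projection and
`c_i ∈ k[G/G]` is pulled back to a constant function on `G/H`; the subgroup `σ⁻¹ none` gets
no trivial summand. -/
noncomputable def brauerMap (σ : SubgroupsOfCard G p ≃ Option (Fin p)) :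
    ((G ⧸ (⊥ : Subgroup G) →₀ k) × (Fin p → G ⧸ (⊤ : Subgroup G) →₀ k)) →ₗ[k]
      ((H : SubgroupsOfCard G p) → G ⧸ H.1 →₀ k) :=
  LinearMap.coprod (LinearMap.pi fun _ => lmapDomain k k (mulActionHomOfLE bot_le))
    (LinearMap.pi fun H =>
      lcomapOfFinite k (mulActionHomOfLE le_top) ∘ₗ (σ H).elim 0 LinearMap.proj)

variable {k}

lemma brauerMap_apply (σ : SubgroupsOfCard G p ≃ Option (Fin p))
    (f : G ⧸ (⊥ : Subgroup G) →₀ k) (c : Fin p → G ⧸ (⊤ : Subgroup G) →₀ k)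
    (H : SubgroupsOfCard G p) :
    brauerMap k σ (f, c) H = mapDomain (mulActionHomOfLE bot_le) f +
      lcomapOfFinite k (mulActionHomOfLE le_top) ((σ H).elim 0 c) := by
  simp only [brauerMap, LinearMap.coprod_apply, LinearMap.pi_apply, Pi.add_apply,
    lmapDomain_apply, LinearMap.comp_apply]
  cases σ H <;> rfl

lemma brauerMap_ofMulAction (σ : SubgroupsOfCard G p ≃ Option (Fin p)) (g : G)
    (v : (G ⧸ (⊥ : Subgroup G) →₀ k) × (Fin p → G ⧸ (⊤ : Subgroup G) →₀ k)) :
    brauerMap k σ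
        ((Representation.ofMulAction k G (G ⧸ (⊥ : Subgroup G)) g
          (MonoidAlgebra.ofCoeff v.1)).coeff,
        fun i => (Representation.ofMulAction k G (G ⧸ (⊤ : Subgroup G)) g
          (MonoidAlgebra.ofCoeff (v.2 i))).coeff) =
      fun H => (Representation.ofMulAction k G (G ⧸ H.1) g
        (MonoidAlgebra.ofCoeff (brauerMap k σ v H))).coeff := by
  funext H
  rw [brauerMap_apply, brauerMap_apply, MonoidAlgebra.ofCoeff_add, map_add,
    MonoidAlgebra.coeff_add, mapDomain_ofMulAction]
  congr 1
  cases σ H with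
  | none => simp
  | some i => simp [lcomapOfFinite_ofMulAction]

end BrauerMap

section Injectivity

open Finset QuotientGroup
open scoped Classical

attribute [local instance] QuotientGroup.subsingleton_quotient_top

variable {k : Type*} [Field k] {G : Type*} [Group G] [Fintype G] {p : ℕ} [Fact p.Prime]
  (hexp : ∀ g : G, g ^ p = 1) (hcard : Nat.card G = p ^ 2)
include hexp hcard

lemma sum_mapDomain_mulActionHomOfLE_bot_apply (f : G ⧸ (⊥ : Subgroup G) →₀ k) (x : G) :
    ∑ H : SubgroupsOfCard G p, mapDomain (mulActionHomOfLE (bot_le : ⊥ ≤ H.1)) f (x : G ⧸ H.1) =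
      p • f x + ∑ g : G, f g := by
  simp_rw [mapDomain_mulActionHomOfLE_bot_apply]
  rw [sum_subgroupsOfCard_sum_mem_of_card_eq_sq hexp hcard
    fun h => f ((x * h : G) : G ⧸ (⊥ : Subgroup G)), mul_one]
  congr 1
  exact Equiv.sum_comp (Equiv.mulLeft x) fun g => f (g : G ⧸ (⊥ : Subgroup G))

theorem brauerMap_injective (hpk : (p : k) ≠ 0) (σ : SubgroupsOfCard G p ≃ Option (Fin p)) :
    Function.Injective (brauerMap k σ) := by
  rw [← LinearMap.ker_eq_bot, LinearMap.ker_eq_bot']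
  rintro ⟨f, c⟩ hfc
  have hcomp (H : SubgroupsOfCard G p) (x : G) :
      mapDomain (mulActionHomOfLE bot_le) f (x : G ⧸ H.1) + (σ H).elim 0 c 1 = 0 := by
    have := congr($hfc H (x : G ⧸ H.1))
    rwa [brauerMap_apply, Finsupp.add_apply, lcomapOfFinite_apply,
      Subsingleton.elim (mulActionHomOfLE le_top _) 1] at this
  have hsum (x : G) : p • f x + ∑ g : G, f g + ∑ H, (σ H).elim 0 c 1 = 0 := by
    rw [← sum_mapDomain_mulActionHomOfLE_bot_apply hexp hcard, ← sum_add_distrib]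
    exact sum_eq_zero fun H _ => hcomp H x
  have hconst (x : G) : f x = f (1 : G) := by
    have h := (hsum x).trans (hsum 1).symm
    rw [add_left_inj, add_left_inj, nsmul_eq_mul, nsmul_eq_mul] at h
    exact mul_left_cancel₀ hpk h
  have hf1 : f (1 : G) = 0 := by
    have h := hcomp (σ.symm none) 1
    simp only [mapDomain_mulActionHomOfLE_bot_apply, Equiv.apply_symm_apply, Option.elim_none,
      Finsupp.coe_zero, Pi.zero_apply, add_zero, hconst, sum_const, Subgroup.card_filter_mem,
      (σ.symm none).2, nsmul_eq_mul] at h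
    exact (mul_eq_zero.1 h).resolve_left hpk
  obtain rfl : f = 0 := by
    ext a
    induction a using QuotientGroup.induction_on with
    | H x => exact (hconst x).trans hf1
  refine Prod.ext rfl (funext fun i => ?_)
  have h := congr($hfc (σ.symm (some i)))
  rw [brauerMap_apply, mapDomain_zero, zero_add, Equiv.apply_symm_apply, Option.elim_some] at h
  refine lcomapOfFinite_injective (q := mulActionHomOfLE (le_top : (σ.symm (some i)).1 ≤ ⊤))
    (fun _ => ⟨((1 : G) : G ⧸ _), Subsingleton.elim _ _⟩) ?_
  rw [h]
  exact (map_zero _).symm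

end Injectivity

section Dimension

open Module
open scoped Classical

variable (k : Type*) [Field k] {G : Type*} [Group G] [Fintype G]

lemma finrank_finsupp_quotient (H : Subgroup G) : finrank k (G ⧸ H →₀ k) = H.index := by
  rw [finrank_finsupp_self, ← Nat.card_eq_fintype_card]
  rfl

lemma finrank_brauerMap_domain_eq_codomain {p : ℕ} [hp : Fact p.Prime]
    (hexp : ∀ g : G, g ^ p = 1) (hcard : Nat.card G = p ^ 2) :
    finrank k ((G ⧸ (⊥ : Subgroup G) →₀ k) × (Fin p → G ⧸ (⊤ : Subgroup G) →₀ k)) =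
      finrank k ((H : SubgroupsOfCard G p) → G ⧸ H.1 →₀ k) := by
  have hindex (H : SubgroupsOfCard G p) : H.1.index = p := by
    have h := H.1.card_mul_index
    rw [H.2, hcard, sq] at h
    exact Nat.eq_of_mul_eq_mul_left hp.out.pos h
  simp only [finrank_prod, finrank_pi_fintype, finrank_finsupp_quotient, hindex,
    Subgroup.index_bot, Subgroup.index_top, Finset.sum_const, Finset.card_univ,
    ← Nat.card_eq_fintype_card, Nat.card_fin, card_subgroupsOfCard_of_card_eq_sq hexp hcard,
    hcard, smul_eq_mul]
  ring

end Dimension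

/-- For `G = C_p × C_p`: `G` has exactly `p+1` subgroups of order `p`, and
`{e} + p·G − ∑_{i=0}^{p} C_pⁱ` is a Brauer relation, i.e. there is an isomorphism of
`ℚ[G]`-modules `ℚ[G/{e}] ⊕ ℚ[G/G]^{⊕p} ≅ ⊕_{i} ℚ[G/C_pⁱ]`, the sum on the right being over
all subgroups of order `p`. -/
theorem brauer_relation_cp_times_cp (p : ℕ) (hp : p.Prime)
    (G : Type) [Group G] [Fintype G]
    (hG : Nonempty (G ≃* Multiplicative (ZMod p × ZMod p))) :
    Nat.card {H : Subgroup G // Nat.card H = p} = p + 1 ∧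
    ∃ e : (((G ⧸ (⊥ : Subgroup G)) →₀ ℚ) × (Fin p → ((G ⧸ (⊤ : Subgroup G)) →₀ ℚ))) ≃ₗ[ℚ]
          (∀ H : {H : Subgroup G // Nat.card H = p}, (G ⧸ H.1) →₀ ℚ),
      ∀ (g : G) (v : ((G ⧸ (⊥ : Subgroup G)) →₀ ℚ) × (Fin p → ((G ⧸ (⊤ : Subgroup G)) →₀ ℚ))),
        e ((Representation.ofMulAction ℚ G (G ⧸ (⊥ : Subgroup G)) g (MonoidAlgebra.ofCoeff v.1)).coeff,
           fun i => (Representation.ofMulAction ℚ G (G ⧸ (⊤ : Subgroup G)) g (MonoidAlgebra.ofCoeff (v.2 i))).coeff)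
        = fun H => (Representation.ofMulAction ℚ G (G ⧸ H.1) g (MonoidAlgebra.ofCoeff (e v H))).coeff := by
  obtain ⟨φ⟩ := hG
  have : Fact p.Prime := ⟨hp⟩
  have hcard : Nat.card G = p ^ 2 := by
    rw [Nat.card_congr φ.toEquiv, Nat.card_congr Multiplicative.toAdd, Nat.card_prod,
      Nat.card_zmod, sq]
  have hexp (g : G) : g ^ p = 1 := φ.injective <| by
    rw [map_pow, map_one]
    apply Multiplicative.toAdd.injective
    ext <;> simp
  have hN := card_subgroupsOfCard_of_card_eq_sq hexp hcard
  classical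
  let σ : SubgroupsOfCard G p ≃ Option (Fin p) :=
    Fintype.equivOfCardEq (by rw [← Nat.card_eq_fintype_card, hN]; simp)
  refine ⟨hN, LinearMap.linearEquivOfInjective _ (brauerMap_injective hexp hcard
    (Nat.cast_ne_zero.2 hp.ne_zero) σ) (finrank_brauerMap_domain_eq_codomain ℚ hexp hcard),
    brauerMap_ofMulAction σ⟩
end

section
/- Let p be an odd prime and let G = D_{2p} = ⟨r, s | rᵖ = s² = e, s r s = r⁻¹⟩ be the dihedral group of order 2p. Then there is an isomorphism of ℚ[G]-modules ℚ[G/{e}] ⊕ ℚ[G/G]^{⊕2} ≅ ℚ[G/⟨s⟩]^{⊕2} ⊕ ℚ[G/⟨r⟩]; that is, {e} + 2·D_{2p} − 2·C₂ − C_p is a Brauer relation for D_{2p}. -/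
/-!
Write `s = sr 0`, `r = r 1`, and `N` for the sum of all points of a finite `G`-set. The map
`ℚ[G/{e}] ⊕ ℚ[G/G] ⊕ ℚ[G/G] → ℚ[G/⟨s⟩] ⊕ ℚ[G/⟨s⟩] ⊕ ℚ[G/⟨r⟩]` sending `g ∈ G/{e}` to
`(g⟨s⟩, g r⟨s⟩, g⟨r⟩)` and the points of the two copies of `G/G` to `(N, 0, 0)` and `(0, N, 0)`
is `G`-equivariant, and both sides have dimension `2p + 2`, so it suffices to show that it is
injective.
If `(x, a, b)` lies in its kernel, then `x(g) + x(g s)` and `x(g) + x(g s')` are constant in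
`g`, where `s' = r s r⁻¹ = sr (-2)`; hence `x(g r²) - x(g)` is a constant `c`. Going once around
`⟨r⟩` gives `p c = 0`, and as `r²` generates `⟨r⟩` for odd `p`, `x` is constant on the cosets
of `⟨r⟩`. The third component says that `x` sums to zero on each of them, so `x = 0`, and then
`a = b = 0`.
-/

open Finset Finsupp
open scoped MonoidAlgebra

theorem MonoidAlgebra.finrank_eq_natCard {k X : Type*} [Semiring k] [StrongRankCondition k]
    [Finite X] : Module.finrank k k[X] = Nat.card X := by
  have := Fintype.ofFinite X
  rw [(coeffLinearEquiv k).finrank_eq, Module.finrank_finsupp_self, Fintype.card_eq_nat_card]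

theorem ZMod.exists_mul_natCast_eq {n a : ℕ} [NeZero n] (ha : a.Coprime n) (i : ZMod n) :
    ∃ k : ℕ, (a : ZMod n) * k = i := by
  obtain ⟨u, hu⟩ := (isUnit_iff_coprime a n).mpr ha
  refine ⟨(↑u⁻¹ * i : ZMod n).val, ?_⟩
  rw [natCast_zmod_val, ← mul_assoc, ← hu, Units.mul_inv, one_mul]

namespace Representation

theorem ofMulAction_ofCoeff_const {k G Y : Type*} [CommSemiring k] [Group G] [MulAction G Y]
    [Finite Y] (g : G) (c : k) :
    ofMulAction k G Y g (.ofCoeff (equivFunOnFinite.symm fun _ => c)) =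
      .ofCoeff (equivFunOnFinite.symm fun _ => c) := by
  ext1; ext y
  simp [coeff_ofMulAction]

namespace IntertwiningMap

variable {k G X Y V : Type*} [CommSemiring k]

section Monoid

variable [Monoid G] [MulAction G X] [MulAction G Y] [AddCommMonoid V] [Module k V]

noncomputable def ofMulActionHom (f : X →[G] Y) :
    IntertwiningMap (ofMulAction k G X) (ofMulAction k G Y) :=
  (MonoidAlgebra.mapDomainLinearMap k k f).intertwiningMap_of_isIntertwiningMap _ _ fun g v => by
    ext1
    simp [ofMulAction_def, ← mapDomain_comp, Function.comp_def]

theorem coeff_ofMulActionHom (f : X →[G] Y) (v : k[X]) :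
    (ofMulActionHom f v).coeff = v.coeff.mapDomain f := rfl

noncomputable def ofInvariant (ρ : Representation k G V) (v : V) (hv : ∀ g, ρ g v = v) :
    IntertwiningMap (trivial k G k) ρ :=
  (LinearMap.toSpanSingleton k V v).intertwiningMap_of_isIntertwiningMap _ _ fun g c => by
    simp [hv]

end Monoid

section Group

variable [Group G] [MulAction G X] [MulAction G Y] [Subsingleton X] [MulOneClass X] [Finite Y]

/-- Sends the point of `X` to the sum of all points of `Y`. -/
noncomputable def constOfSubsingleton : IntertwiningMap (ofMulAction k G X) (ofMulAction k G Y) :=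
  (ofInvariant _ _ (ofMulAction_ofCoeff_const · 1)).comp
    (ofMulActionSubsingletonEquivTrivial k G X).toIntertwiningMap

theorem coeff_constOfSubsingleton_apply (v : k[X]) (y : Y) :
    (constOfSubsingleton (G := G) v).coeff y = v.coeff 1 := by
  show (v.coeff 1 • MonoidAlgebra.ofCoeff (equivFunOnFinite.symm fun _ => (1 : k))).coeff y = _
  simp

end Group

end IntertwiningMap

end Representation

section Fibres

variable {G M : Type*} [Group G] [AddCommMonoid M]

theorem Finsupp.mapDomain_mk_zpowers_apply {s : G} (hs : IsOfFinOrder s) (v : G →₀ M) (g : G) :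
    v.mapDomain (QuotientGroup.mk : G → G ⧸ Subgroup.zpowers s) g =
      ∑ i ∈ range (orderOf s), v (g * s ^ i) := by
  classical
  induction v using Finsupp.induction_linear with
  | zero => simp
  | add v w hv hw => simp [mapDomain_add, hv, hw, sum_add_distrib]
  | single a c =>
    simp only [mapDomain_single, single_apply]
    by_cases h : (a : G ⧸ Subgroup.zpowers s) = g
    · obtain ⟨i, hi, hsi⟩ := Finset.mem_image.mp
        (hs.mem_zpowers_iff_mem_range_orderOf.mp (QuotientGroup.eq.mp h.symm))
      have ha : a = g * s ^ i := by rw [hsi, mul_inv_cancel_left]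
      rw [if_pos h, sum_eq_single_of_mem i hi, if_pos ha]
      rintro j hj hji
      rw [if_neg]
      rintro haj
      exact hji (pow_injOn_Iio_orderOf (by simpa using hj) (by simpa using hi)
        (mul_left_cancel (haj.symm.trans ha)))
    · rw [if_neg h, sum_eq_zero]
      rintro i -
      rw [if_neg]
      rintro rfl
      exact h (QuotientGroup.eq.mpr (by simp [Subgroup.npow_mem_zpowers s i]))

theorem Finsupp.mapDomain_mulRight_apply (v : G →₀ M) (t g : G) :
    v.mapDomain (· * t) g = v (g * t⁻¹) := by
  simpa using mapDomain_apply (mul_left_injective t) v (g * t⁻¹)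

def QuotientGroup.botMulRight (K : Subgroup G) (t : G) :
    G ⧸ (⊥ : Subgroup G) →[G] G ⧸ K where
  toFun q := ((quotientBot q * t : G) : G ⧸ K)
  map_smul' g q := by
    induction q using QuotientGroup.induction_on with
    | H a => exact congrArg _ (mul_assoc g a t)

theorem Finsupp.mapDomain_botMulRight_zpowers_apply {s : G} (hs : IsOfFinOrder s) (t : G)
    (v : G ⧸ (⊥ : Subgroup G) →₀ M) (g : G) :
    v.mapDomain (QuotientGroup.botMulRight (Subgroup.zpowers s) t) ↑(g * t) =
      ∑ i ∈ range (orderOf s), v ↑(g * t * s ^ i * t⁻¹) := by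
  have : ⇑(QuotientGroup.botMulRight (Subgroup.zpowers s) t) =
      QuotientGroup.mk ∘ (· * t) ∘ QuotientGroup.quotientBot := rfl
  rw [this, mapDomain_comp, mapDomain_comp, mapDomain_mk_zpowers_apply hs]
  refine Finset.sum_congr rfl fun i _ => ?_
  rw [mapDomain_mulRight_apply]
  exact mapDomain_apply QuotientGroup.quotientBot.injective v
    (↑(g * t * s ^ i * t⁻¹) : G ⧸ (⊥ : Subgroup G))

end Fibres

namespace DihedralGroup

open Representation IntertwiningMap QuotientGroup

variable {p : ℕ}

theorem eq_zero_of_sum_sr_of_sum_r (hp : Odd p) {x : DihedralGroup p → ℚ} {a b : ℚ}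
    (h₁ : ∀ g, x g + x (g * sr 0) = a) (h₂ : ∀ g, x g + x (g * sr (-2)) = b)
    (h₃ : ∀ g, ∑ i ∈ range p, x (g * r i) = 0) : x = 0 := by
  have : NeZero p := ⟨hp.pos.ne'⟩
  have hp₀ : (p : ℚ) ≠ 0 := by exact_mod_cast hp.pos.ne'
  have hstep (g) : x (g * r 2) = x g + (a - b) := by
    have := h₁ (g * sr (-2))
    rw [mul_assoc, sr_mul_sr, zero_sub, neg_neg] at this
    linarith [h₂ g]
  have hiter (g) (k : ℕ) : x (g * r (2 * (k : ZMod p))) = x g + k * (a - b) := by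
    induction k with
    | zero => simp [r_zero]
    | succ k ih =>
      rw [Nat.cast_succ, mul_add_one, ← r_mul_r, ← mul_assoc, hstep, ih]
      push_cast
      ring
  have hab : a - b = 0 := by
    have := hiter 1 p
    rw [ZMod.natCast_self, mul_zero, ← one_def, mul_one] at this
    simpa [hp₀] using this
  have hconst (g) (i : ZMod p) : x (g * r i) = x g := by
    obtain ⟨k, rfl⟩ := ZMod.exists_mul_natCast_eq (Nat.coprime_two_left.mpr hp) i
    rw [Nat.cast_ofNat, hiter, hab, mul_zero, add_zero]
  funext g
  have := h₃ g
  simp only [hconst, sum_const, card_range, nsmul_eq_mul] at this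
  simpa [hp₀] using this

theorem index_zpowers_sr (i : ZMod p) : (Subgroup.zpowers (sr i)).index = p := by
  have := (Subgroup.zpowers (sr i)).card_mul_index
  rw [Nat.card_zpowers, orderOf_sr, nat_card] at this
  omega

theorem index_zpowers_r_one [NeZero p] :
    (Subgroup.zpowers (r 1 : DihedralGroup p)).index = 2 := by
  have := (Subgroup.zpowers (r 1 : DihedralGroup p)).card_mul_index
  rw [Nat.card_zpowers, orderOf_r_one, nat_card, mul_comm 2] at this
  exact Nat.eq_of_mul_eq_mul_left (NeZero.pos p) this

variable (p) [NeZero p]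

attribute [local instance] QuotientGroup.subsingleton_quotient_top

local notation "ℚ[G⧸" K "]" =>
  Representation.ofMulAction ℚ (DihedralGroup p)
    (DihedralGroup p ⧸ (K : Subgroup (DihedralGroup p)))

noncomputable def brauerMap :
    IntertwiningMap (ℚ[G⧸ ⊥].prod (ℚ[G⧸ ⊤].prod ℚ[G⧸ ⊤]))
      (ℚ[G⧸ Subgroup.zpowers (sr 0)].prod
        (ℚ[G⧸ Subgroup.zpowers (sr 0)].prod ℚ[G⧸ Subgroup.zpowers (r 1)])) :=
  .prod ((ofMulActionHom (botMulRight _ 1)).comp (fst ℚ _ _) +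
      constOfSubsingleton.comp ((fst ℚ _ _).comp (snd ℚ _ _)))
    (.prod ((ofMulActionHom (botMulRight _ (r 1))).comp (fst ℚ _ _) +
      constOfSubsingleton.comp ((snd ℚ _ _).comp (snd ℚ _ _)))
      ((ofMulActionHom (botMulRight _ 1)).comp (fst ℚ _ _)))

variable {p}

theorem brauerMap_fst (w) : (brauerMap p w).1 =
    ofMulActionHom (botMulRight _ 1) w.1 + constOfSubsingleton (G := DihedralGroup p) w.2.1 := rfl

theorem brauerMap_snd_fst (w) : (brauerMap p w).2.1 =
    ofMulActionHom (botMulRight _ (r 1)) w.1 + constOfSubsingleton (G := DihedralGroup p) w.2.2 :=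
  rfl

theorem brauerMap_snd_snd (w) : (brauerMap p w).2.2 = ofMulActionHom (botMulRight _ 1) w.1 := rfl

theorem coeff_brauerMap_fst (v a b) (g : DihedralGroup p) :
    (brauerMap p (v, a, b)).1.coeff g =
      v.coeff g + v.coeff ↑(g * sr 0 : DihedralGroup p) + a.coeff 1 := by
  have := congrArg (fun w => w.coeff ↑(g * 1)) (brauerMap_fst (p := p) (v, a, b))
  rw [MonoidAlgebra.coeff_add, Finsupp.add_apply, coeff_ofMulActionHom,
    coeff_constOfSubsingleton_apply,
    mapDomain_botMulRight_zpowers_apply (isOfFinOrder_of_finite (sr 0)), orderOf_sr] at this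
  simpa only [sum_range_succ, sum_range_zero, pow_zero, pow_one, mul_one, inv_one,
    zero_add] using this

theorem coeff_brauerMap_snd_fst (v a b) (g : DihedralGroup p) :
    (brauerMap p (v, a, b)).2.1.coeff ↑(g * r 1 : DihedralGroup p) =
      v.coeff g + v.coeff ↑(g * sr (-2) : DihedralGroup p) + b.coeff 1 := by
  have := congrArg (fun w => w.coeff ↑(g * r 1 : DihedralGroup p))
    (brauerMap_snd_fst (p := p) (v, a, b))
  rw [MonoidAlgebra.coeff_add, Finsupp.add_apply, coeff_ofMulActionHom,
    coeff_constOfSubsingleton_apply,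
    mapDomain_botMulRight_zpowers_apply (isOfFinOrder_of_finite (sr 0)), orderOf_sr] at this
  have e₀ : g * r 1 * sr 0 ^ 0 * (r 1)⁻¹ = g := by group
  have e₁ : g * r 1 * sr 0 ^ 1 * (r 1)⁻¹ = g * sr (-2) := by
    rw [pow_one, inv_r, mul_assoc, mul_assoc, sr_mul_r, r_mul_sr]
    ring_nf
  rwa [sum_range_succ, sum_range_one, e₀, e₁] at this

theorem coeff_brauerMap_snd_snd (v a b) (g : DihedralGroup p) :
    (brauerMap p (v, a, b)).2.2.coeff g = ∑ i ∈ range p, v.coeff ↑(g * r (i : ZMod p)) := by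
  have := congrArg (fun w => w.coeff ↑(g * 1)) (brauerMap_snd_snd (p := p) (v, a, b))
  rw [coeff_ofMulActionHom,
    mapDomain_botMulRight_zpowers_apply (isOfFinOrder_of_finite (r 1)), orderOf_r_one] at this
  simpa only [r_one_pow, mul_one, inv_one] using this

theorem brauerMap_injective (hp : Odd p) : Function.Injective (brauerMap p) := by
  rw [injective_iff_map_eq_zero]
  rintro ⟨v, a, b⟩ h
  let x (g : DihedralGroup p) : ℚ := v.coeff g
  have h₁ (g) : x g + x (g * sr 0) = -a.coeff 1 :=
    eq_neg_of_add_eq_zero_left <| (coeff_brauerMap_fst v a b g).symm.trans (by simp [h])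
  have h₂ (g) : x g + x (g * sr (-2)) = -b.coeff 1 :=
    eq_neg_of_add_eq_zero_left <| (coeff_brauerMap_snd_fst v a b g).symm.trans (by simp [h])
  have h₃ (g) : ∑ i ∈ range p, x (g * r i) = 0 :=
    (coeff_brauerMap_snd_snd v a b g).symm.trans (by simp [h])
  have hx := eq_zero_of_sum_sr_of_sum_r hp h₁ h₂ h₃
  have hv : v = 0 := by
    ext1; ext q
    induction q using QuotientGroup.induction_on with
    | H g => exact congrFun hx g
  have ha : a = 0 := (MonoidAlgebra.uniqueLinearEquiv ℚ _).map_eq_zero_iff.mp <| by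
    simpa [hx] using h₁ 1
  have hb : b = 0 := (MonoidAlgebra.uniqueLinearEquiv ℚ _).map_eq_zero_iff.mp <| by
    simpa [hx] using h₂ 1
  simp [hv, ha, hb]

theorem brauerMap_bijective (hp : Odd p) : Function.Bijective (brauerMap p) := by
  refine ⟨brauerMap_injective hp, ?_⟩
  refine (LinearMap.injective_iff_surjective_of_finrank_eq_finrank
    (f := (brauerMap p).toLinearMap) ?_).mp (brauerMap_injective hp)
  simp only [Module.finrank_prod, MonoidAlgebra.finrank_eq_natCard, ← Subgroup.index_eq_card,
    Subgroup.index_bot, Subgroup.index_top, index_zpowers_sr, index_zpowers_r_one, nat_card]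
  ring

end DihedralGroup

open DihedralGroup in
theorem brauer_relation_dihedral_2p_general (p : ℕ) (hodd : Odd p) :
    ∃ e : (((DihedralGroup p ⧸ (⊥ : Subgroup (DihedralGroup p))) →₀ ℚ) ×
            ((DihedralGroup p ⧸ (⊤ : Subgroup (DihedralGroup p))) →₀ ℚ) ×
            ((DihedralGroup p ⧸ (⊤ : Subgroup (DihedralGroup p))) →₀ ℚ)) ≃ₗ[ℚ]
          (((DihedralGroup p ⧸ Subgroup.zpowers (DihedralGroup.sr 0)) →₀ ℚ) ×
            ((DihedralGroup p ⧸ Subgroup.zpowers (DihedralGroup.sr 0)) →₀ ℚ) ×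
            ((DihedralGroup p ⧸ Subgroup.zpowers (DihedralGroup.r 1)) →₀ ℚ)),
      ∀ (g : DihedralGroup p)
        (v : ((DihedralGroup p ⧸ (⊥ : Subgroup (DihedralGroup p))) →₀ ℚ) ×
             ((DihedralGroup p ⧸ (⊤ : Subgroup (DihedralGroup p))) →₀ ℚ) ×
             ((DihedralGroup p ⧸ (⊤ : Subgroup (DihedralGroup p))) →₀ ℚ)),
        e ((Representation.ofMulAction ℚ (DihedralGroup p)
             (DihedralGroup p ⧸ (⊥ : Subgroup (DihedralGroup p))) g (MonoidAlgebra.ofCoeff v.1)).coeff,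
           (Representation.ofMulAction ℚ (DihedralGroup p)
             (DihedralGroup p ⧸ (⊤ : Subgroup (DihedralGroup p))) g (MonoidAlgebra.ofCoeff v.2.1)).coeff,
           (Representation.ofMulAction ℚ (DihedralGroup p)
             (DihedralGroup p ⧸ (⊤ : Subgroup (DihedralGroup p))) g (MonoidAlgebra.ofCoeff v.2.2)).coeff)
        = ((Representation.ofMulAction ℚ (DihedralGroup p)
             (DihedralGroup p ⧸ Subgroup.zpowers (DihedralGroup.sr 0)) g (MonoidAlgebra.ofCoeff (e v).1)).coeff,
           (Representation.ofMulAction ℚ (DihedralGroup p)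
             (DihedralGroup p ⧸ Subgroup.zpowers (DihedralGroup.sr 0)) g (MonoidAlgebra.ofCoeff (e v).2.1)).coeff,
           (Representation.ofMulAction ℚ (DihedralGroup p)
             (DihedralGroup p ⧸ Subgroup.zpowers (DihedralGroup.r 1)) g (MonoidAlgebra.ofCoeff (e v).2.2)).coeff) := by
  have : NeZero p := ⟨hodd.pos.ne'⟩
  let E := (brauerMap p).ofBijective (brauerMap_bijective hodd)
  let coeffs {X Y Z : Type} :
      (ℚ[X] × ℚ[Y] × ℚ[Z]) ≃ₗ[ℚ] (X →₀ ℚ) × (Y →₀ ℚ) × (Z →₀ ℚ) :=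
    (MonoidAlgebra.coeffLinearEquiv ℚ).prodCongr
      ((MonoidAlgebra.coeffLinearEquiv ℚ).prodCongr (MonoidAlgebra.coeffLinearEquiv ℚ))
  exact ⟨coeffs.symm ≪≫ₗ E.toLinearEquiv ≪≫ₗ coeffs, fun g v =>
    congrArg coeffs
      (Representation.IntertwiningMap.isIntertwining _ _ E.toIntertwiningMap g (coeffs.symm v))⟩

/-- `{e} + 2·D_{2p} − 2·C₂ − C_p` is a Brauer relation for the dihedral group `D_{2p}` of
order `2p` (`p` an odd prime): writing `s = sr 0` and `r = r 1`, there is an isomorphism of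
`ℚ[G]`-modules `ℚ[G/{e}] ⊕ ℚ[G/G]⊕² ≅ ℚ[G/⟨s⟩]⊕² ⊕ ℚ[G/⟨r⟩]`. -/
theorem brauer_relation_dihedral_2p (p : ℕ) (hp : p.Prime) (hodd : Odd p) :
    ∃ e : (((DihedralGroup p ⧸ (⊥ : Subgroup (DihedralGroup p))) →₀ ℚ) ×
            ((DihedralGroup p ⧸ (⊤ : Subgroup (DihedralGroup p))) →₀ ℚ) ×
            ((DihedralGroup p ⧸ (⊤ : Subgroup (DihedralGroup p))) →₀ ℚ)) ≃ₗ[ℚ]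
          (((DihedralGroup p ⧸ Subgroup.zpowers (DihedralGroup.sr 0)) →₀ ℚ) ×
            ((DihedralGroup p ⧸ Subgroup.zpowers (DihedralGroup.sr 0)) →₀ ℚ) ×
            ((DihedralGroup p ⧸ Subgroup.zpowers (DihedralGroup.r 1)) →₀ ℚ)),
      ∀ (g : DihedralGroup p)
        (v : ((DihedralGroup p ⧸ (⊥ : Subgroup (DihedralGroup p))) →₀ ℚ) ×
             ((DihedralGroup p ⧸ (⊤ : Subgroup (DihedralGroup p))) →₀ ℚ) ×
             ((DihedralGroup p ⧸ (⊤ : Subgroup (DihedralGroup p))) →₀ ℚ)),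
        e ((Representation.ofMulAction ℚ (DihedralGroup p)
             (DihedralGroup p ⧸ (⊥ : Subgroup (DihedralGroup p))) g (MonoidAlgebra.ofCoeff v.1)).coeff,
           (Representation.ofMulAction ℚ (DihedralGroup p)
             (DihedralGroup p ⧸ (⊤ : Subgroup (DihedralGroup p))) g (MonoidAlgebra.ofCoeff v.2.1)).coeff,
           (Representation.ofMulAction ℚ (DihedralGroup p)
             (DihedralGroup p ⧸ (⊤ : Subgroup (DihedralGroup p))) g (MonoidAlgebra.ofCoeff v.2.2)).coeff)
        = ((Representation.ofMulAction ℚ (DihedralGroup p)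
             (DihedralGroup p ⧸ Subgroup.zpowers (DihedralGroup.sr 0)) g (MonoidAlgebra.ofCoeff (e v).1)).coeff,
           (Representation.ofMulAction ℚ (DihedralGroup p)
             (DihedralGroup p ⧸ Subgroup.zpowers (DihedralGroup.sr 0)) g (MonoidAlgebra.ofCoeff (e v).2.1)).coeff,
           (Representation.ofMulAction ℚ (DihedralGroup p)
             (DihedralGroup p ⧸ Subgroup.zpowers (DihedralGroup.r 1)) g (MonoidAlgebra.ofCoeff (e v).2.2)).coeff) :=
  brauer_relation_dihedral_2p_general p hodd
end

section
/- Let D₈ be the subgroup of GL₂(ℚ) generated by r = [[0,−1],[1,0]] and s = [[1,0],[0,−1]], a dihedral group of order 8 whose elements preserve the standard inner product ⟨·,·⟩ on ℚ². Then the fixed subspaces of ℚ² satisfy: Fix(⟨s, r²⟩) = 0, Fix(⟨sr, r²⟩) = 0, Fix(⟨s⟩) = ℚ·(1,0), and Fix(⟨sr⟩) = ℚ·(1,−1). Consequently, for every nonzero u ∈ Fix(⟨s⟩) and every nonzero w ∈ Fix(⟨sr⟩), the ratio ⟨u,u⟩/⟨w,w⟩ lies in 2·(ℚ^×)²; that is,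 the regulator constant 𝒞_Θ(ρ) of the 2-dimensional representation ρ of D₈ relative to Θ = ⟨s⟩ + ⟨sr,r²⟩ − ⟨sr⟩ − ⟨s,r²⟩ is ≡ 2 mod (ℚ^×)². -/
/-!
Since `r² = -1` and `ℚ²` has no `2`-torsion, every subgroup containing `r²` has zero fixed
space. The reflection `s` fixes the line spanned by `(1, 0)` and `sr = [[0,-1],[-1,0]]` the line
spanned by `(1, -1)`; on generators `a • (1, 0)` and `b • (1, -1)` the form takes the values `a²`
and `2b²`, and `a² / (2b²) = 2 (a / 2b)²`.
-/

open Matrix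

namespace D8

variable (R : Type*) [CommRing R]

def rotation : Matrix (Fin 2) (Fin 2) R := !![0, -1; 1, 0]

def reflection : Matrix (Fin 2) (Fin 2) R := !![1, 0; 0, -1]

theorem rotation_mul_rotation : rotation R * rotation R = -1 := by
  ext i j
  fin_cases i <;> fin_cases j <;> simp [rotation]

theorem reflection_mul_rotation : reflection R * rotation R = !![0, -1; -1, 0] := by
  ext i j
  fin_cases i <;> fin_cases j <;> simp [reflection, rotation]

variable {R}

theorem mulVec_rotation_mul_rotation_eq_self_iff [IsAddTorsionFree R] {v : Fin 2 → R} :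
    (rotation R * rotation R) *ᵥ v = v ↔ v = 0 := by
  rw [rotation_mul_rotation, neg_mulVec, one_mulVec, neg_eq_self]

theorem mulVec_reflection_eq_self_iff [IsAddTorsionFree R] {v : Fin 2 → R} :
    reflection R *ᵥ v = v ↔ v 1 = 0 := by
  rw [← neg_eq_self, funext_iff, Fin.forall_fin_two]
  simp [reflection, vecHead, vecTail]

theorem mulVec_reflection_mul_rotation_eq_self_iff {v : Fin 2 → R} :
    (reflection R * rotation R) *ᵥ v = v ↔ v 0 = -v 1 := by
  rw [reflection_mul_rotation, funext_iff, Fin.forall_fin_two]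
  simp only [mulVec_fin_two, of_apply, cons_val', cons_val_zero, cons_val_one, empty_val',
    cons_val_fin_one]
  exact ⟨fun h => by linear_combination -h.1,
    fun h => ⟨by linear_combination -h, by linear_combination -h⟩⟩

theorem setOf_apply_one_eq_zero :
    {v : Fin 2 → R | v 1 = 0} = Set.range fun q : R => q • ![1, 0] := by
  ext v
  constructor
  · intro (hv : _ = _)
    exact ⟨v 0, by ext i; fin_cases i <;> simp [hv]⟩
  · rintro ⟨q, rfl⟩
    simp

theorem setOf_apply_zero_eq_neg_apply_one :
    {v : Fin 2 → R | v 0 = -v 1} = Set.range fun q : R => q • ![1, -1] := by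
  ext v
  constructor
  · intro (hv : _ = _)
    exact ⟨v 0, by ext i; fin_cases i <;> simp [hv]⟩
  · rintro ⟨q, rfl⟩
    simp

end D8

open D8 in
/-- For `D₈ ≤ GL₂(ℚ)` generated by `r = [[0,-1],[1,0]]` and `s = [[1,0],[0,-1]]`:
the fixed subspaces of `ℚ²` under `⟨s,r²⟩` and `⟨sr,r²⟩` are zero, `Fix⟨s⟩ = ℚ·(1,0)`,
`Fix⟨sr⟩ = ℚ·(1,−1)`; consequently for nonzero fixed vectors `u ∈ Fix⟨s⟩`, `w ∈ Fix⟨sr⟩`,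
the ratio `⟨u,u⟩/⟨w,w⟩` lies in `2·(ℚ^×)²`, i.e. the regulator constant of the 2-dimensional
representation of `D₈` relative to `Θ = ⟨s⟩ + ⟨sr,r²⟩ − ⟨sr⟩ − ⟨s,r²⟩` is `2 mod (ℚ^×)²`. -/
theorem regulator_constant_D8_two_dim_rep
    (r s : Matrix (Fin 2) (Fin 2) ℚ)
    (hr : r = !![0, -1; 1, 0]) (hs : s = !![1, 0; 0, -1]) :
    (∀ v : Fin 2 → ℚ, s.mulVec v = v → (r * r).mulVec v = v → v = 0) ∧
    (∀ v : Fin 2 → ℚ, (s * r).mulVec v = v → (r * r).mulVec v = v → v = 0) ∧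
    ({v : Fin 2 → ℚ | s.mulVec v = v} = Set.range fun q : ℚ => q • ![1, 0]) ∧
    ({v : Fin 2 → ℚ | (s * r).mulVec v = v} = Set.range fun q : ℚ => q • ![1, -1]) ∧
    (∀ u w : Fin 2 → ℚ, u ≠ 0 → w ≠ 0 → s.mulVec u = u → (s * r).mulVec w = w →
      ∃ q : ℚ, q ≠ 0 ∧
        (u 0 * u 0 + u 1 * u 1) / (w 0 * w 0 + w 1 * w 1) = 2 * q ^ 2) := by
  obtain rfl : r = rotation ℚ := hr
  obtain rfl : s = reflection ℚ := hs
  have fix_reflection :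
      {v : Fin 2 → ℚ | reflection ℚ *ᵥ v = v} = Set.range fun q : ℚ => q • ![1, 0] := by
    simp only [mulVec_reflection_eq_self_iff, setOf_apply_one_eq_zero]
  have fix_reflection_rotation :
      {v : Fin 2 → ℚ | (reflection ℚ * rotation ℚ) *ᵥ v = v} =
        Set.range fun q : ℚ => q • ![1, -1] := by
    simp only [mulVec_reflection_mul_rotation_eq_self_iff, setOf_apply_zero_eq_neg_apply_one]
  refine ⟨fun v _ h => mulVec_rotation_mul_rotation_eq_self_iff.1 h,
    fun v _ h => mulVec_rotation_mul_rotation_eq_self_iff.1 h, fix_reflection,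
    fix_reflection_rotation, ?_⟩
  intro u w hu hw hfu hfw
  obtain ⟨a, rfl⟩ : u ∈ Set.range fun q : ℚ => q • ![1, 0] := fix_reflection ▸ hfu
  obtain ⟨b, rfl⟩ : w ∈ Set.range fun q : ℚ => q • ![1, -1] :=
    fix_reflection_rotation ▸ hfw
  have ha : a ≠ 0 := by rintro rfl; simp at hu
  have hb : b ≠ 0 := by rintro rfl; simp at hw
  refine ⟨a / (2 * b), by positivity, ?_⟩
  simp only [Pi.smul_apply, smul_eq_mul, cons_val_zero, cons_val_one, cons_val_fin_one,
    mul_one, mul_zero, add_zero, mul_neg, neg_mul, neg_neg]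
  field_simp
  ring
end

section
/- Let p be an odd prime, let G = Sₚ × C₂ act on V = {x ∈ ℚᵖ : x₁ + ⋯ + x_p = 0} by (ρ, c)·x = (−1)ᶜ·(x_{ρ⁻¹(1)}, …, x_{ρ⁻¹(p)}), and let H' ≤ G be the subgroup generated by the elements (π, 0) for permutations π fixing p−1 and p, together with ((p−1 p), 1). With ⟨·,·⟩ the standard inner product on ℚᵖ, u₁ = (−(p−1), 1, …, 1) and u₂ = e_{p−1} − e_p, one has ⟨u₁,u₁⟩ = p(p−1), ⟨u₂,u₂⟩ = 2, and ((1/(p−1)!)·⟨u₁,u₁⟩) / ((1/(2(p−2)!))·⟨u₂,u₂⟩) = p. Consequently, for every nonzero u in the Stab(1)×{0}-fixed subspace of V and every nonzero w in the H'-fixed subspace of V, the quantity ((1/(p−1)!)·⟨u,u⟩) / ((1/(2(p−2)!))·⟨w,w⟩) lies in p·(ℚ^×)²; that is, the regulator constant 𝒞_Θ(σ⊗ε) ≡ p mod (ℚ^×)² for Θ = (S_{p−1}×{e}) − (Sₚ×{e}) − H'. -/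
/-!
The `Stab(1)`-fixed vectors of the zero-sum hyperplane are exactly the multiples of `u₁`: they are
constant off the fixed point, and the zero-sum condition determines the remaining coordinate.
The `H'`-fixed vectors are multiples of `u₂`, already because `((p−1 p), 1)` forces
`w = −(w ∘ (p−1 p))`.
So both fixed spaces are lines, and for `u = c • u₁`, `w = d • u₂` the quotient is `(c / d)²` times
the one computed from `u₁`, `u₂`, which is `p(p−1)(p−2)! / (p−1)! = p`.
-/

/-- The sign `(−1)ᶜ` for `c ∈ C₂ = ℤ/2ℤ` (written multiplicatively). -/
def C2Sign (c : Multiplicative (ZMod 2)) : ℚ := (-1 : ℚ) ^ (Multiplicative.toAdd c).val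

/-- The action of `Sₚ × C₂` on `ℚᵖ` given by `(ρ, c)·x = (−1)ᶜ·(x ∘ ρ⁻¹)`. -/
def permSignAct (p : ℕ) (g : Equiv.Perm (Fin p) × Multiplicative (ZMod 2)) (x : Fin p → ℚ) :
    Fin p → ℚ :=
  fun i => C2Sign g.2 * x (g.1⁻¹ i)

/-- The subgroup `H' ≤ Sₚ × C₂` generated by the elements `(π, 0)` with `π` fixing `a` and `b`,
together with `((a b), 1)`. -/
def Hprime (p : ℕ) (a b : Fin p) : Subgroup (Equiv.Perm (Fin p) × Multiplicative (ZMod 2)) :=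
  Subgroup.closure
    ({g | g.2 = 1 ∧ g.1 a = a ∧ g.1 b = b} ∪ {(Equiv.swap a b, Multiplicative.ofAdd 1)})

open Finset

def stabFixedVec (n : ℕ) (z : Fin n) : Fin n → ℚ :=
  fun i => if i = z then -((n : ℚ) - 1) else 1

def swapAntiVec {n : ℕ} (a b : Fin n) : Fin n → ℚ :=
  fun i => if i = a then 1 else if i = b then -1 else 0

lemma C2Sign_one : C2Sign 1 = 1 := by
  simp [C2Sign]

lemma C2Sign_ofAdd_one : C2Sign (Multiplicative.ofAdd 1) = -1 := by
  have : (1 : ZMod 2).val = 1 := by decide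
  simp [C2Sign, this]

lemma sum_smul_mul_self {ι R : Type*} [Fintype ι] [CommSemiring R] (c : R) (v : ι → R) :
    ∑ i, (c • v) i * (c • v) i = c ^ 2 * ∑ i, v i * v i := by
  rw [mul_sum]
  exact sum_congr rfl fun i _ => by simp only [Pi.smul_apply, smul_eq_mul]; ring

lemma sum_stabFixedVec_mul_self (n : ℕ) (z : Fin n) :
    ∑ i, stabFixedVec n z i * stabFixedVec n z i = n * ((n : ℚ) - 1) := by
  rw [Fintype.sum_eq_add_sum_compl z]
  have hrest : ∀ i ∈ ({z}ᶜ : Finset (Fin n)), stabFixedVec n z i * stabFixedVec n z i = 1 :=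
    fun i hi => by simp [stabFixedVec, notMem_singleton.mp (mem_compl.mp hi)]
  rw [sum_congr rfl hrest, sum_const, card_compl, card_singleton, Fintype.card_fin,
    nsmul_eq_mul, Nat.cast_sub (Fin.pos z), mul_one]
  simp only [stabFixedVec]
  push_cast
  ring

lemma sum_swapAntiVec_mul_self {n : ℕ} {a b : Fin n} (hab : a ≠ b) :
    ∑ i, swapAntiVec a b i * swapAntiVec a b i = 2 := by
  have hsq : ∀ i, swapAntiVec a b i * swapAntiVec a b i =
      (if i = a then 1 else 0) + (if i = b then 1 else 0) := by
    intro i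
    unfold swapAntiVec
    split_ifs <;> simp_all
  simp only [hsq, sum_add_distrib, sum_ite_eq', mem_univ, if_true]
  norm_num

lemma eq_of_stabilizer_fixed {n : ℕ} {z : Fin n} {u : Fin n → ℚ}
    (hfix : ∀ ρ : Equiv.Perm (Fin n), ρ z = z → permSignAct n (ρ, 1) u = u)
    {i j : Fin n} (hi : i ≠ z) (hj : j ≠ z) : u i = u j := by
  have h := congrFun (hfix (Equiv.swap i j) (Equiv.swap_apply_of_ne_of_ne hi.symm hj.symm)) i
  simpa [permSignAct, C2Sign_one] using h.symm

lemma eq_smul_stabFixedVec {n : ℕ} {z j : Fin n} (hj : j ≠ z) {u : Fin n → ℚ}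
    (hsum : ∑ i, u i = 0)
    (hfix : ∀ ρ : Equiv.Perm (Fin n), ρ z = z → permSignAct n (ρ, 1) u = u) :
    u = u j • stabFixedVec n z := by
  have hconst : ∀ i ∈ ({z}ᶜ : Finset (Fin n)), u i = u j :=
    fun i hi => eq_of_stabilizer_fixed hfix (notMem_singleton.mp (mem_compl.mp hi)) hj
  have huz : u z = -((n : ℚ) - 1) * u j := by
    rw [Fintype.sum_eq_add_sum_compl z, sum_congr rfl hconst, sum_const, card_compl,
      card_singleton, Fintype.card_fin, nsmul_eq_mul, Nat.cast_sub (Fin.pos z)] at hsum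
    push_cast at hsum
    linarith
  funext i
  by_cases hi : i = z
  · simp [stabFixedVec, hi, huz, mul_comm]
  · simp [stabFixedVec, hi, eq_of_stabilizer_fixed hfix hi hj]

lemma eq_smul_swapAntiVec {n : ℕ} {a b : Fin n} (hab : a ≠ b) {w : Fin n → ℚ}
    (hanti : ∀ i, w i = -w (Equiv.swap a b i)) : w = w a • swapAntiVec a b := by
  funext i
  have h := hanti i
  by_cases hia : i = a
  · subst hia; simp [swapAntiVec]
  by_cases hib : i = b
  · subst hib; simpa [swapAntiVec, hia] using h
  · rw [Equiv.swap_apply_of_ne_of_ne hia hib] at h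
    simp only [Pi.smul_apply, swapAntiVec, hia, hib, if_false, smul_zero]
    linarith

lemma anti_of_Hprime_fixed {n : ℕ} {a b : Fin n} {w : Fin n → ℚ}
    (hfix : ∀ g ∈ Hprime n a b, permSignAct n g w = w) (i : Fin n) :
    w i = -w (Equiv.swap a b i) := by
  have hmem : (Equiv.swap a b, Multiplicative.ofAdd (1 : ZMod 2)) ∈ Hprime n a b :=
    Subgroup.subset_closure (Set.mem_union_right _ rfl)
  have h := congrFun (hfix _ hmem) i
  simp only [permSignAct, C2Sign_ofAdd_one, Equiv.swap_inv] at h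
  linarith

lemma cast_factorial_sub_one {p : ℕ} (hp : 2 ≤ p) :
    ((p - 1).factorial : ℚ) = ((p : ℚ) - 1) * (p - 2).factorial := by
  obtain ⟨k, rfl⟩ := Nat.exists_eq_add_of_le hp
  rw [show 2 + k - 1 = k + 1 by omega, show 2 + k - 2 = k by omega, Nat.factorial_succ]
  push_cast
  ring

theorem regulator_constant_sigma_tensor_epsilon_general (p : ℕ) (hp : p.Prime)
    (a b : Fin p) (ha : (a : ℕ) = p - 2) (hb : (b : ℕ) = p - 1)
    (u₁ u₂ : Fin p → ℚ)
    (hu₁ : u₁ = fun i => if i = (⟨0, hp.pos⟩ : Fin p) then -((p : ℚ) - 1) else 1)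
    (hu₂ : u₂ = fun i => if i = a then (1 : ℚ) else if i = b then -1 else 0) :
    (∑ i, u₁ i * u₁ i = (p : ℚ) * ((p : ℚ) - 1)) ∧
    (∑ i, u₂ i * u₂ i = 2) ∧
    ((1 / ((p - 1).factorial : ℚ) * ∑ i, u₁ i * u₁ i) /
        (1 / (2 * ((p - 2).factorial : ℚ)) * ∑ i, u₂ i * u₂ i) = p) ∧
    ∀ u w : Fin p → ℚ, u ≠ 0 → w ≠ 0 →
      (∑ i, u i = 0) →
      (∀ ρ : Equiv.Perm (Fin p), ρ ⟨0, hp.pos⟩ = ⟨0, hp.pos⟩ → permSignAct p (ρ, 1) u = u) →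
      (∑ i, w i = 0) →
      (∀ g ∈ Hprime p a b, permSignAct p g w = w) →
      ∃ q : ℚ, q ≠ 0 ∧
        (1 / ((p - 1).factorial : ℚ) * ∑ i, u i * u i) /
          (1 / (2 * ((p - 2).factorial : ℚ)) * ∑ i, w i * w i) = p * q ^ 2 := by
  obtain rfl : u₁ = stabFixedVec p ⟨0, hp.pos⟩ := hu₁
  obtain rfl : u₂ = swapAntiVec a b := hu₂
  have hp2 := hp.two_le
  have hab : a ≠ b := fun h => by have := congrArg Fin.val h; omega
  have hb0 : b ≠ ⟨0, hp.pos⟩ := fun h => by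
    have : (b : ℕ) = 0 := congrArg Fin.val h
    omega
  have hS₁ := sum_stabFixedVec_mul_self p ⟨0, hp.pos⟩
  have hS₂ := sum_swapAntiVec_mul_self hab
  have hp1 : (p : ℚ) - 1 ≠ 0 := by
    have : (2 : ℚ) ≤ p := by exact_mod_cast hp2
    linarith
  have hratio : (1 / ((p - 1).factorial : ℚ) * (p * ((p : ℚ) - 1))) /
      (1 / (2 * ((p - 2).factorial : ℚ)) * 2) = p := by
    rw [cast_factorial_sub_one hp2]
    field_simp
  refine ⟨hS₁, hS₂, hS₁ ▸ hS₂ ▸ hratio, ?_⟩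
  intro u w hu hw husum hufix _ hwfix
  obtain ⟨c, hu'⟩ : ∃ c, u = c • stabFixedVec p ⟨0, hp.pos⟩ :=
    ⟨_, eq_smul_stabFixedVec hb0 husum hufix⟩
  obtain ⟨d, hw'⟩ : ∃ d, w = d • swapAntiVec a b :=
    ⟨_, eq_smul_swapAntiVec hab (anti_of_Hprime_fixed hwfix)⟩
  refine ⟨c / d, div_ne_zero (left_ne_zero_of_smul (hu' ▸ hu)) (left_ne_zero_of_smul (hw' ▸ hw)),
    ?_⟩
  rw [hu', hw', sum_smul_mul_self, sum_smul_mul_self, hS₁, hS₂, cast_factorial_sub_one hp2]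
  field_simp

/-- With the standard inner product on `ℚᵖ`, `u₁ = (−(p−1),1,…,1)` and `u₂ = e_{p−1} − e_p`:
`⟨u₁,u₁⟩ = p(p−1)`, `⟨u₂,u₂⟩ = 2`, and
`((1/(p−1)!)·⟨u₁,u₁⟩)/((1/(2(p−2)!))·⟨u₂,u₂⟩) = p`. Consequently for any nonzero `u` in the
`Stab(1)×{0}`-fixed subspace of the zero-sum hyperplane `V` and nonzero `w` in the `H'`-fixed
subspace of `V`, the quantity `((1/(p−1)!)·⟨u,u⟩)/((1/(2(p−2)!))·⟨w,w⟩)` lies in `p·(ℚ^×)²`;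
i.e. the regulator constant `𝒞_Θ(σ⊗ε) ≡ p mod (ℚ^×)²` for
`Θ = (S_{p−1}×{e}) − (Sₚ×{e}) − H'`. -/
theorem regulator_constant_sigma_tensor_epsilon (p : ℕ) (hp : p.Prime) (hodd : Odd p)
    (a b : Fin p) (ha : (a : ℕ) = p - 2) (hb : (b : ℕ) = p - 1)
    (u₁ u₂ : Fin p → ℚ)
    (hu₁ : u₁ = fun i => if i = (⟨0, hp.pos⟩ : Fin p) then -((p : ℚ) - 1) else 1)
    (hu₂ : u₂ = fun i => if i = a then (1 : ℚ) else if i = b then -1 else 0) :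
    (∑ i, u₁ i * u₁ i = (p : ℚ) * ((p : ℚ) - 1)) ∧
    (∑ i, u₂ i * u₂ i = 2) ∧
    ((1 / ((p - 1).factorial : ℚ) * ∑ i, u₁ i * u₁ i) /
        (1 / (2 * ((p - 2).factorial : ℚ)) * ∑ i, u₂ i * u₂ i) = p) ∧
    ∀ u w : Fin p → ℚ, u ≠ 0 → w ≠ 0 →
      (∑ i, u i = 0) →
      (∀ ρ : Equiv.Perm (Fin p), ρ ⟨0, hp.pos⟩ = ⟨0, hp.pos⟩ → permSignAct p (ρ, 1) u = u) →
      (∑ i, w i = 0) →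
      (∀ g ∈ Hprime p a b, permSignAct p g w = w) →
      ∃ q : ℚ, q ≠ 0 ∧
        (1 / ((p - 1).factorial : ℚ) * ∑ i, u i * u i) /
          (1 / (2 * ((p - 2).factorial : ℚ)) * ∑ i, w i * w i) = p * q ^ 2 :=
  regulator_constant_sigma_tensor_epsilon_general p hp a b ha hb u₁ u₂ hu₁ hu₂
end

section
/- Let p be an odd prime, G = Sₚ × C₂, and let H' ≤ G be the subgroup generated by the elements (π, 0) for permutations π fixing p−1 and p, together with ((p−1 p), 1). Let τ = (t, 0) ∈ G where t ∈ Sₚ is a single transposition. Then the number of double cosets ⟨τ⟩\G/H' equals p² − 3p + 3. -/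
open MulAction

section DoubleCosetOrbit

variable {G X : Type*} [Group G] [MulAction G X]

noncomputable def DoubleCoset.quotientStabilizerEquivOrbitRel [IsPretransitive G X]
    (K : Subgroup G) (x : X) :
    DoubleCoset.Quotient (K : Set G) (stabilizer G x) ≃ orbitRel.Quotient K X :=
  Equiv.ofBijective
    (Quotient.map' (· • x) fun g g' hgg' => by
      obtain ⟨k, hk, h, hh, rfl⟩ := DoubleCoset.rel_iff.mp hgg'
      refine ⟨⟨k⁻¹, inv_mem hk⟩, ?_⟩
      simp [mul_smul, mem_stabilizer_iff.mp hh])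
    ⟨by
      rintro ⟨g⟩ ⟨g'⟩ hgg'
      obtain ⟨⟨k, hk⟩, hkg : k • g' • x = g • x⟩ := Quotient.exact hgg'
      refine Quotient.sound (DoubleCoset.rel_iff.mpr ⟨k⁻¹, inv_mem hk, g⁻¹ * k * g',
        by rw [mem_stabilizer_iff, mul_smul, mul_smul, hkg, inv_smul_smul], by group⟩),
    by
      rintro ⟨y⟩
      obtain ⟨g, rfl⟩ := exists_smul_eq G x y
      exact ⟨Quotient.mk'' g, rfl⟩⟩

theorem two_mul_card_orbitRel_zpowers [Finite X] {τ : G} (hτ : orderOf τ = 2) :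
    2 * Nat.card (orbitRel.Quotient (Subgroup.zpowers τ) X) =
      Nat.card X + Nat.card (fixedBy X τ) := by
  classical
  have hfin : IsOfFinOrder τ := orderOf_pos_iff.mp (by omega)
  have := Fintype.ofFinite X
  have := Fintype.ofEquiv _ (finEquivZPowers hfin)
  have := Fintype.ofFinite (orbitRel.Quotient (Subgroup.zpowers τ) X)
  have burnside := sum_card_fixedBy_eq_card_orbits_mul_card_group (Subgroup.zpowers τ) X
  have hpow (i : Fin (orderOf τ)) :
      Fintype.card (fixedBy X (finEquivZPowers hfin i)) = Nat.card (fixedBy X (τ ^ (i : ℕ))) := by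
    rw [Nat.card_eq_fintype_card]; rfl
  rw [← Equiv.sum_comp (finEquivZPowers hfin), Fintype.sum_congr _ _ hpow,
    Fin.sum_univ_eq_sum_range (fun i => Nat.card (fixedBy X (τ ^ i))), hτ,
    Fintype.card_eq_nat_card, Fintype.card_eq_nat_card, Nat.card_zpowers, hτ] at burnside
  simp only [Finset.sum_range_succ, Finset.sum_range_zero, pow_zero, pow_one,
    fixedBy_one_eq_univ, Nat.card_univ, zero_add] at burnside
  rw [burnside, mul_comm]

end DoubleCosetOrbit

theorem Nat.card_subtype_fst_ne_snd (β : Type*) [Finite β] :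
    Nat.card {q : β × β // q.1 ≠ q.2} = Nat.card β * Nat.card β - Nat.card β := by
  classical
  have := Fintype.ofFinite β
  simp only [Nat.card_eq_fintype_card, Fintype.card_subtype]
  rw [← Finset.card_univ, ← Finset.offDiag_card]
  congr 1
  ext q
  simp

theorem Multiplicative.zmodTwo_eq_one_or_eq_ofAdd_one (c : Multiplicative (ZMod 2)) :
    c = 1 ∨ c = Multiplicative.ofAdd 1 := by
  revert c; decide

namespace Equiv.Perm

variable {α : Type*}

instance : SMul (Perm α × Multiplicative (ZMod 2)) (α × α) where
  smul g q := if g.2 = 1 then (g.1 q.1, g.1 q.2) else (g.1 q.2, g.1 q.1)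

theorem smul_pair_of_eq_one {g : Perm α × Multiplicative (ZMod 2)} (hg : g.2 = 1) (q : α × α) :
    g • q = (g.1 q.1, g.1 q.2) := if_pos hg

theorem smul_pair_of_eq_ofAdd_one {g : Perm α × Multiplicative (ZMod 2)}
    (hg : g.2 = Multiplicative.ofAdd 1) (q : α × α) : g • q = (g.1 q.2, g.1 q.1) :=
  if_neg (hg ▸ by decide)

instance : MulAction (Perm α × Multiplicative (ZMod 2)) (α × α) where
  one_smul q := smul_pair_of_eq_one rfl q
  mul_smul g h q := by
    rcases Multiplicative.zmodTwo_eq_one_or_eq_ofAdd_one g.2 with hg | hg <;>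
    rcases Multiplicative.zmodTwo_eq_one_or_eq_ofAdd_one h.2 with hh | hh <;>
    simp [smul_pair_of_eq_one, smul_pair_of_eq_ofAdd_one, hg, hh,
      show Multiplicative.ofAdd (1 : ZMod 2) * Multiplicative.ofAdd 1 = 1 by decide]

def distinctPairs (α : Type*) : SubMulAction (Perm α × Multiplicative (ZMod 2)) (α × α) where
  carrier := {q | q.1 ≠ q.2}
  smul_mem' g q hq := by
    rcases Multiplicative.zmodTwo_eq_one_or_eq_ofAdd_one g.2 with hg | hg
    · rw [smul_pair_of_eq_one hg]; exact g.1.injective.ne hq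
    · rw [smul_pair_of_eq_ofAdd_one hg]; exact g.1.injective.ne (Ne.symm hq)

instance : IsPretransitive (Perm α × Multiplicative (ZMod 2)) (distinctPairs α) where
  exists_smul_eq q r := by
    obtain ⟨σ, h₁, h₂⟩ := is_two_pretransitive_iff.mp (isMultiplyPretransitive α 2) q.2 r.2
    refine ⟨(σ, 1), Subtype.ext ?_⟩
    rw [SubMulAction.val_smul, smul_pair_of_eq_one rfl]
    exact Prod.ext h₁ h₂

theorem card_distinctPairs [Finite α] :
    Nat.card (distinctPairs α) = Nat.card α * Nat.card α - Nat.card α :=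
  Nat.card_subtype_fst_ne_snd α

theorem card_fixedBy_distinctPairs [Finite α] (σ : Perm α) :
    Nat.card (fixedBy (distinctPairs α) ((σ, 1) : Perm α × Multiplicative (ZMod 2))) =
      Nat.card (Function.fixedPoints σ) * Nat.card (Function.fixedPoints σ) -
        Nat.card (Function.fixedPoints σ) := by
  have fixed_iff (q : distinctPairs α) :
      ((σ, 1) : Perm α × Multiplicative (ZMod 2)) • q = q ↔ σ q.1.1 = q.1.1 ∧ σ q.1.2 = q.1.2 := by
    rw [Subtype.ext_iff, SubMulAction.val_smul, smul_pair_of_eq_one rfl, Prod.ext_iff]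
  rw [← Nat.card_subtype_fst_ne_snd]
  exact Nat.card_congr
    { toFun q := ⟨(⟨q.1.1.1, ((fixed_iff _).mp q.2).1⟩, ⟨q.1.1.2, ((fixed_iff _).mp q.2).2⟩),
        fun h => q.1.2 (congrArg Subtype.val h)⟩
      invFun q := ⟨⟨(q.1.1, q.1.2), fun h => q.2 (Subtype.ext h)⟩,
        (fixed_iff _).mpr ⟨q.1.1.2, q.1.2.2⟩⟩
      left_inv _ := rfl
      right_inv _ := rfl }

theorem IsSwap.card_fixedPoints [DecidableEq α] [Finite α] {σ : Perm α} (hσ : σ.IsSwap) :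
    Nat.card (Function.fixedPoints σ) = Nat.card α - 2 := by
  have := Fintype.ofFinite α
  rw [Nat.card_eq_fintype_card, Nat.card_eq_fintype_card, Equiv.Perm.card_fixedPoints,
    sum_cycleType, card_support_eq_two.mpr hσ]

end Equiv.Perm

open Equiv.Perm in
theorem Hprime_eq_stabilizer {p : ℕ} {a b : Fin p} (hab : a ≠ b) :
    Hprime p a b = stabilizer _ (⟨(a, b), hab⟩ : distinctPairs (Fin p)) := by
  rw [SubMulAction.stabilizer_of_subMul]
  apply le_antisymm
  · rw [Hprime, Subgroup.closure_le]
    rintro g (⟨hg, ha, hb⟩ | rfl)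
    · rw [SetLike.mem_coe, mem_stabilizer_iff, smul_pair_of_eq_one hg, ha, hb]
    · rw [SetLike.mem_coe, mem_stabilizer_iff, smul_pair_of_eq_ofAdd_one rfl]
      simp
  · intro g hg
    rw [mem_stabilizer_iff] at hg
    rcases Multiplicative.zmodTwo_eq_one_or_eq_ofAdd_one g.2 with h2 | h2
    · rw [smul_pair_of_eq_one h2, Prod.mk.injEq] at hg
      exact Subgroup.subset_closure (Or.inl ⟨h2, hg⟩)
    · rw [smul_pair_of_eq_ofAdd_one h2, Prod.mk.injEq] at hg
      have hsplit : g = (g.1 * Equiv.swap a b, 1) * (Equiv.swap a b, Multiplicative.ofAdd 1) :=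
        Prod.ext (by simp [mul_assoc]) (by simp [h2])
      rw [hsplit]
      exact mul_mem (Subgroup.subset_closure (Or.inl ⟨rfl, by simp [hg], by simp [hg]⟩))
        (Subgroup.subset_closure (Or.inr rfl))

open Equiv.Perm in
theorem double_coset_count_transposition_general (p : ℕ) (hodd : Odd p)
    (a b : Fin p) (ha : (a : ℕ) = p - 2) (hb : (b : ℕ) = p - 1)
    (t : Equiv.Perm (Fin p)) (ht : t.IsSwap) :
    Nat.card (DoubleCoset.Quotient
        ((Subgroup.zpowers ((t, 1) : Equiv.Perm (Fin p) × Multiplicative (ZMod 2)) :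
          Subgroup (Equiv.Perm (Fin p) × Multiplicative (ZMod 2))) :
            Set (Equiv.Perm (Fin p) × Multiplicative (ZMod 2)))
        ((Hprime p a b : Subgroup (Equiv.Perm (Fin p) × Multiplicative (ZMod 2))) :
            Set (Equiv.Perm (Fin p) × Multiplicative (ZMod 2))))
      = p ^ 2 - 3 * p + 3 := by
  have hp : 3 ≤ p := by
    obtain ⟨x, y, hxy, -⟩ := ht
    obtain ⟨k, rfl⟩ := hodd
    have := Fin.val_ne_of_ne hxy
    omega
  have hab : a ≠ b := fun h => by have := congrArg Fin.val h; omega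
  have hτ : orderOf ((t, 1) : Equiv.Perm (Fin p) × Multiplicative (ZMod 2)) = 2 := by
    rw [Prod.orderOf_mk, ht.orderOf, orderOf_one, Nat.lcm_one_right]
  have hcount := two_mul_card_orbitRel_zpowers (X := distinctPairs (Fin p)) hτ
  rw [card_distinctPairs, card_fixedBy_distinctPairs, ht.card_fixedPoints, Nat.card_fin] at hcount
  rw [Hprime_eq_stabilizer hab, Nat.card_congr (DoubleCoset.quotientStabilizerEquivOrbitRel _ _)]
  obtain ⟨m, rfl⟩ : ∃ m, p = m + 3 := ⟨p - 3, by omega⟩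
  simp only [show m + 3 - 2 = m + 1 by omega] at hcount
  ring_nf at hcount ⊢
  omega

/-- For `τ = (t, 0) ∈ G = Sₚ × C₂` with `t` a single transposition, the number of double
cosets `⟨τ⟩\G/H'` is `p² − 3p + 3`. -/
theorem double_coset_count_transposition (p : ℕ) (hp : p.Prime) (hodd : Odd p)
    (a b : Fin p) (ha : (a : ℕ) = p - 2) (hb : (b : ℕ) = p - 1)
    (t : Equiv.Perm (Fin p)) (ht : t.IsSwap) :
    Nat.card (DoubleCoset.Quotient
        ((Subgroup.zpowers ((t, 1) : Equiv.Perm (Fin p) × Multiplicative (ZMod 2)) :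
          Subgroup (Equiv.Perm (Fin p) × Multiplicative (ZMod 2))) :
            Set (Equiv.Perm (Fin p) × Multiplicative (ZMod 2)))
        ((Hprime p a b : Subgroup (Equiv.Perm (Fin p) × Multiplicative (ZMod 2))) :
            Set (Equiv.Perm (Fin p) × Multiplicative (ZMod 2))))
      = p ^ 2 - 3 * p + 3 :=
  double_coset_count_transposition_general p hodd a b ha hb t ht
end

section
/- Let p be an odd prime, G = Sₚ × C₂, and let H' ≤ G be the subgroup generated by the elements (π, 0) for permutations π fixing p−1 and p, together with ((p−1 p), 1). Let τ = (t, 1) ∈ G where t ∈ Sₚ is a product of (p−3)/2 disjoint transpositions (the identity if p = 3) and 1 is the nontrivial element of C₂. Then the number of double cosets ⟨τ⟩\G/H' equals (p² − 3)/2. -/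
open MulAction Subgroup Equiv Finset

section DoubleCosetOrbits

variable {G X : Type*} [Group G] [MulAction G X]

theorem DoubleCoset.setoid_stabilizer_iff (A : Subgroup G) (x : X) (g g' : G) :
    DoubleCoset.setoid (A : Set G) (stabilizer G x : Set G) g g' ↔
      orbitRel A X (g • x) (g' • x) := by
  rw [DoubleCoset.rel_iff, orbitRel_apply]
  constructor
  · rintro ⟨α, hα, k, hk, rfl⟩
    refine ⟨⟨α, hα⟩⁻¹, ?_⟩
    change α⁻¹ • (α * g * k) • x = g • x
    rw [mul_smul, mul_smul, mem_stabilizer_iff.mp hk, inv_smul_smul]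
  · rintro ⟨⟨α, hα⟩, h⟩
    change α • g' • x = g • x at h
    refine ⟨α⁻¹, A.inv_mem hα, g⁻¹ * (α * g'), ?_, by group⟩
    rw [mem_stabilizer_iff, mul_smul, mul_smul, h, inv_smul_smul]

noncomputable def DoubleCoset.quotientStabilizerEquiv [IsPretransitive G X] (A : Subgroup G)
    (x : X) : DoubleCoset.Quotient (A : Set G) (stabilizer G x : Set G) ≃ orbitRel.Quotient A X :=
  Equiv.ofBijective
    (Quotient.map' (· • x) fun g g' => (DoubleCoset.setoid_stabilizer_iff A x g g').mp)
    ⟨fun q q' => Quotient.inductionOn₂' q q' fun g g' h =>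
        Quotient.sound' ((DoubleCoset.setoid_stabilizer_iff A x g g').mpr (Quotient.exact' h)),
      fun q => Quotient.inductionOn' q fun y => by
        obtain ⟨g, hg⟩ := exists_smul_eq G x y
        exact ⟨Quotient.mk'' g, congrArg Quotient.mk'' hg⟩⟩

theorem MulAction.card_orbitRel_quotient_zpowers_mul_two [Finite X] {g : G}
    (hg : orderOf g = 2) :
    Nat.card (orbitRel.Quotient (zpowers g) X) * 2 = Nat.card X + Nat.card (fixedBy X g) := by
  classical
  let e : Fin 2 ≃ zpowers g :=
    (finCongr hg).symm.trans (finEquivZPowers (orderOf_pos_iff.mp (by omega)))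
  have : Fintype X := Fintype.ofFinite X
  have : Fintype (zpowers g) := Fintype.ofEquiv _ e
  have burnside := sum_card_fixedBy_eq_card_orbits_mul_card_group (zpowers g) X
  rw [← Fintype.sum_equiv e _ _ fun _ => rfl, Fin.sum_univ_two, ← Fintype.card_congr e,
    Fintype.card_fin] at burnside
  simp only [← Nat.card_eq_fintype_card] at burnside
  rw [← burnside]
  have h0 : e 0 = 1 := Subtype.ext (pow_zero g)
  have h1 : e 1 = ⟨g, mem_zpowers g⟩ := Subtype.ext (pow_one g)
  rw [h0, h1, fixedBy_one_eq_univ, Nat.card_univ]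
  rfl

end DoubleCosetOrbits

theorem Multiplicative.ZMod.eq_one_or_eq_ofAdd_one (ε : Multiplicative (ZMod 2)) :
    ε = 1 ∨ ε = Multiplicative.ofAdd 1 := by
  revert ε
  decide

open Multiplicative.ZMod

theorem Prod.orderOf_mk_ofAdd_one {M : Type*} [Monoid M] {x : M} (hx : x ^ 2 = 1) :
    orderOf ((x, .ofAdd 1) : M × Multiplicative (ZMod 2)) = 2 :=
  orderOf_eq_prime (by rw [Prod.pow_mk, hx]; rfl) fun h => by simp [Prod.ext_iff] at h

theorem Equiv.Perm.pow_eq_one_of_cycleType_eq_replicate {α : Type*} [Fintype α] [DecidableEq α]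
    {σ : Perm α} {k n : ℕ} (h : σ.cycleType = Multiset.replicate k n) : σ ^ n = 1 := by
  rw [← orderOf_dvd_iff_pow_eq_one, ← lcm_cycleType, h]
  exact Multiset.lcm_dvd.mpr fun m hm => by rw [Multiset.eq_of_mem_replicate hm]

abbrev DistinctPairs (α : Type*) := {q : α × α // q.1 ≠ q.2}

namespace DistinctPairs

variable {α : Type*}

instance : MulAction (Perm α × Multiplicative (ZMod 2)) (DistinctPairs α) where
  smul g q :=
    if g.2 = 1 then ⟨(g.1 q.1.1, g.1 q.1.2), g.1.injective.ne q.2⟩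
    else ⟨(g.1 q.1.2, g.1 q.1.1), g.1.injective.ne q.2.symm⟩
  one_smul q := rfl
  mul_smul g h q := by
    rcases g with ⟨π, ε⟩
    rcases h with ⟨σ, δ⟩
    rcases eq_one_or_eq_ofAdd_one ε with rfl | rfl <;>
      rcases eq_one_or_eq_ofAdd_one δ with rfl | rfl <;> rfl

@[simp]
theorem mk_one_smul_val (π : Perm α) (q : DistinctPairs α) :
    (((π, 1) : Perm α × Multiplicative (ZMod 2)) • q).1 = (π q.1.1, π q.1.2) := rfl

@[simp]
theorem mk_ofAdd_one_smul_val (π : Perm α) (q : DistinctPairs α) :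
    (((π, .ofAdd 1) : Perm α × Multiplicative (ZMod 2)) • q).1 = (π q.1.2, π q.1.1) := rfl

instance [DecidableEq α] :
    IsPretransitive (Perm α × Multiplicative (ZMod 2)) (DistinctPairs α) where
  exists_smul_eq := by
    rintro ⟨⟨a, b⟩, hab⟩ ⟨⟨x, y⟩, hxy⟩
    have hx : x ≠ swap a x b := by
      rw [Ne, ← (swap a x).injective.eq_iff, swap_apply_self, swap_apply_right]
      exact hab
    refine ⟨(swap (swap a x b) y * swap a x, 1), Subtype.ext ?_⟩
    simp [swap_apply_of_ne_of_ne hx hxy]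

theorem mem_fixedBy_mk_ofAdd_one_iff {t : Perm α} (ht : t ^ 2 = 1)
    (q : DistinctPairs α) :
    q ∈ fixedBy (DistinctPairs α) ((t, .ofAdd 1) : Perm α × Multiplicative (ZMod 2)) ↔
      q.1.2 = t q.1.1 := by
  rw [mem_fixedBy, Subtype.ext_iff, mk_ofAdd_one_smul_val, Prod.ext_iff]
  constructor
  · exact fun h => h.2.symm
  · intro h
    simp [h, ← Perm.mul_apply, ← sq, ht]

theorem card_fixedBy_mk_ofAdd_one [Fintype α] [DecidableEq α] {t : Perm α}
    (ht : t ^ 2 = 1) :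
    Nat.card (fixedBy (DistinctPairs α) ((t, .ofAdd 1) : Perm α × Multiplicative (ZMod 2))) =
      #t.support := by
  let e : fixedBy (DistinctPairs α) ((t, .ofAdd 1) : Perm α × Multiplicative (ZMod 2)) ≃
      {x // t x ≠ x} :=
    { toFun q := ⟨q.1.1.1, fun h =>
        q.1.2 (h.symm.trans ((mem_fixedBy_mk_ofAdd_one_iff ht _).mp q.2).symm)⟩
      invFun x := ⟨⟨(x, t x), x.2.symm⟩, (mem_fixedBy_mk_ofAdd_one_iff ht _).mpr rfl⟩
      left_inv q := by
        ext
        · rfl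
        · exact ((mem_fixedBy_mk_ofAdd_one_iff ht _).mp q.2).symm
      right_inv x := rfl }
  rw [Nat.card_congr e, Nat.card_eq_fintype_card, Fintype.card_subtype]
  rfl

theorem card_distinctPairs [Fintype α] [DecidableEq α] :
    Nat.card (DistinctPairs α) = Fintype.card α * Fintype.card α - Fintype.card α := by
  rw [Nat.card_eq_fintype_card, Fintype.card_subtype, ← card_univ, ← offDiag_card]
  congr 1
  ext
  simp

end DistinctPairs

theorem stabilizer_distinctPairs_eq_Hprime {p : ℕ} {a b : Fin p} (hab : a ≠ b) :
    stabilizer (α := DistinctPairs (Fin p)) _ ⟨(a, b), hab⟩ = Hprime p a b := by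
  apply le_antisymm
  · rintro ⟨π, ε⟩ hg
    rw [mem_stabilizer_iff, Subtype.ext_iff] at hg
    rcases eq_one_or_eq_ofAdd_one ε with rfl | rfl
    · simp only [DistinctPairs.mk_one_smul_val, Prod.ext_iff] at hg
      exact subset_closure (Or.inl ⟨rfl, hg⟩)
    · simp only [DistinctPairs.mk_ofAdd_one_smul_val, Prod.ext_iff] at hg
      have hfix : (π * swap a b, 1) ∈ Hprime p a b :=
        subset_closure (Or.inl ⟨rfl, by simpa using hg.1, by simpa using hg.2⟩)
      simpa using mul_mem hfix (subset_closure (Or.inr rfl) : _ ∈ Hprime p a b)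
  · rw [Hprime, closure_le]
    rintro ⟨π, ε⟩ (⟨rfl, ha, hb⟩ | ⟨rfl, rfl⟩)
    · rw [SetLike.mem_coe, mem_stabilizer_iff, Subtype.ext_iff]
      simp [ha, hb]
    · rw [SetLike.mem_coe, mem_stabilizer_iff, Subtype.ext_iff]
      simp

/-- For `τ = (t, 1) ∈ G = Sₚ × C₂` with `t` a product of `(p−3)/2` disjoint transpositions
(the identity if `p = 3`) and `1` the nontrivial element of `C₂`, the number of double cosets
`⟨τ⟩\G/H'` is `(p² − 3)/2`. -/
theorem double_coset_count_middle (p : ℕ) (hp : p.Prime) (hodd : Odd p)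
    (a b : Fin p) (ha : (a : ℕ) = p - 2) (hb : (b : ℕ) = p - 1)
    (t : Equiv.Perm (Fin p))
    (ht : t.cycleType = Multiset.replicate ((p - 3) / 2) 2) :
    Nat.card (DoubleCoset.Quotient
        ((Subgroup.zpowers ((t, Multiplicative.ofAdd 1) :
            Equiv.Perm (Fin p) × Multiplicative (ZMod 2)) :
          Subgroup (Equiv.Perm (Fin p) × Multiplicative (ZMod 2))) :
            Set (Equiv.Perm (Fin p) × Multiplicative (ZMod 2)))
        ((Hprime p a b : Subgroup (Equiv.Perm (Fin p) × Multiplicative (ZMod 2))) :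
            Set (Equiv.Perm (Fin p) × Multiplicative (ZMod 2))))
      = (p ^ 2 - 3) / 2 := by
  have hp3 : 3 ≤ p := by
    obtain ⟨m, rfl⟩ := hodd
    have := hp.two_le
    omega
  have hab : a ≠ b := fun h => by
    have := congrArg Fin.val h
    omega
  have ht2 : t ^ 2 = 1 := Perm.pow_eq_one_of_cycleType_eq_replicate ht
  have burnside := card_orbitRel_quotient_zpowers_mul_two (X := DistinctPairs (Fin p))
    (Prod.orderOf_mk_ofAdd_one ht2)
  rw [DistinctPairs.card_distinctPairs, DistinctPairs.card_fixedBy_mk_ofAdd_one ht2,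
    ← Perm.sum_cycleType, ht, Multiset.sum_replicate, smul_eq_mul, Fintype.card_fin] at burnside
  rw [← stabilizer_distinctPairs_eq_Hprime hab,
    Nat.card_congr (DoubleCoset.quotientStabilizerEquiv _ _), sq]
  have hsq : 3 * p ≤ p * p := Nat.mul_le_mul_right p hp3
  have hpodd := Nat.odd_iff.mp hodd
  omega
end

section
/- Let p be an odd prime, G = Sₚ × C₂, and let H' ≤ G be the subgroup generated by the elements (π, 0) for permutations π fixing p−1 and p, together with ((p−1 p), 1). Let A₁ = Sₚ × {0}, A₂ = Stab(1) × C₂ and A₃ = Stab(1) × {0}, where Stab(1) = {ρ ∈ Sₚ : ρ(1) = 1}. Then the numbers of double cosets are: #(A₁\G/H') = 1, #(A₂\G/H') = 2, and #(A₃\G/H') = 3. -/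
/-!
If `A` is the stabilizer of a point `x` for a transitive action of `G` on `X`, then
`A g H ↦ H • (g⁻¹ • x)` identifies `A\G/H` with the set of `H`-orbits on `X`. Letting
`Sₚ × C₂` act coordinatewise on products, `A₁`, `A₂`, `A₃` are the stabilizers of
`((), 1) ∈ Unit × C₂`, `(z, ()) ∈ Fin p × Unit` and `(z, 1) ∈ Fin p × C₂`, where `z ∉ {a, b}`.
Every generator of `H'` either fixes `a` and `b` and has trivial `C₂`-part, or swaps them and
has nontrivial `C₂`-part. Hence `H'` is transitive on `C₂`; on `Fin p` its orbits are `{a, b}`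
and the complement; on `Fin p × C₂` it splits `{a, b} × C₂` into the two "diagonals"
`{(a, u), (b, u + 1)}` and is transitive on the rest.
-/

open MulAction Multiplicative

section DoubleCosetOrbit

variable {G X : Type*} [Group G] [MulAction G X]

noncomputable def DoubleCoset.quotientStabilizerEquivOrbitRelQuotient [IsPretransitive G X]
    (x : X) (H : Subgroup G) :
    DoubleCoset.Quotient (stabilizer G x : Set G) H ≃ orbitRel.Quotient H X := by
  refine Equiv.ofBijective
    (Quotient.lift (fun g : G => (Quotient.mk _ (g⁻¹ • x) : orbitRel.Quotient H X)) ?_) ⟨?_, ?_⟩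
  · intro g g' hgg'
    obtain ⟨α, hα, k, hk, rfl⟩ := DoubleCoset.rel_iff.1 hgg'
    refine Quotient.sound ⟨⟨k, hk⟩, ?_⟩
    change k • (α * g * k)⁻¹ • x = g⁻¹ • x
    rw [mul_inv_rev, mul_inv_rev, mul_smul, mul_smul, inv_smul_eq_iff.2 hα.symm, smul_inv_smul]
  · rintro ⟨g⟩ ⟨g'⟩ h
    obtain ⟨⟨k, hk⟩, hkg⟩ := Quotient.exact h
    change k • g'⁻¹ • x = g⁻¹ • x at hkg
    refine Quotient.sound (DoubleCoset.rel_iff.2 ⟨g' * k⁻¹ * g⁻¹, ?_, k, hk, by group⟩)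
    rw [mem_stabilizer_iff, mul_smul, mul_smul, ← hkg, inv_smul_smul, smul_inv_smul]
  · rintro ⟨y⟩
    obtain ⟨g, rfl⟩ := exists_smul_eq G y x
    exact ⟨Quotient.mk _ g, congrArg _ (inv_smul_smul g y)⟩

theorem DoubleCoset.card_quotient_stabilizer [IsPretransitive G X] (x : X) (H : Subgroup G) :
    Nat.card (DoubleCoset.Quotient (stabilizer G x : Set G) H) =
      Nat.card (orbitRel.Quotient H X) :=
  Nat.card_congr (quotientStabilizerEquivOrbitRelQuotient x H)

theorem MulAction.apply_smul_eq_of_mem_closure {ι : Type*} {S : Set G} {f : X → ι}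
    (hS : ∀ s ∈ S, ∀ x, f (s • x) = f x) {g : G} (hg : g ∈ Subgroup.closure S) (x : X) :
    f (g • x) = f x := by
  induction hg using Subgroup.closure_induction generalizing x with
  | mem s hs => exact hS s hs x
  | one => rw [one_smul]
  | mul g h _ _ hg hh => rw [mul_smul, hg, hh]
  | inv g _ hg => rw [← hg, smul_inv_smul]

theorem MulAction.card_orbitRel_quotient_eq_of_invariant {ι : Type*} (f : X → ι) (r : ι → X)
    (hf : ∀ (g : G) x, f (g • x) = f x) (hfr : ∀ i, f (r i) = i)
    (hr : ∀ x, x ∈ orbit G (r (f x))) :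
    Nat.card (orbitRel.Quotient G X) = Nat.card ι := by
  refine Nat.card_congr
    { toFun := Quotient.lift f ?_
      invFun := fun i => Quotient.mk _ (r i)
      left_inv := ?_
      right_inv := hfr }
  · rintro x _ ⟨g, rfl⟩
    exact hf g _
  · rintro ⟨x⟩
    exact Quotient.sound (mem_orbit_symm.1 (hr x))

theorem MulAction.stabilizer_eq_top_of_subsingleton [Subsingleton X] (x : X) :
    stabilizer G x = ⊤ :=
  eq_top_iff.2 fun _ _ => Subsingleton.elim _ _

end DoubleCosetOrbit

abbrev Prod.prodMulAction {M N α β : Type*} [Monoid M] [Monoid N] [MulAction M α]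
    [MulAction N β] : MulAction (M × N) (α × β) where
  smul g x := (g.1 • x.1, g.2 • x.2)
  one_smul x := Prod.ext (one_smul M x.1) (one_smul N x.2)
  mul_smul g h x := Prod.ext (mul_smul g.1 h.1 x.1) (mul_smul g.2 h.2 x.2)

attribute [local instance] Prod.prodMulAction

section ProdAction

variable {M N α β : Type*} [Group M] [Group N] [MulAction M α] [MulAction N β]

@[simp]
theorem Prod.smul_mk_prod (g : M × N) (x : α) (y : β) : g • (x, y) = (g.1 • x, g.2 • y) := rfl

theorem MulAction.stabilizer_prod_mk (x : α) (y : β) :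
    stabilizer (M × N) (x, y) = (stabilizer M x).prod (stabilizer N y) := by
  ext g
  simp [Subgroup.mem_prod]

instance [IsPretransitive M α] [IsPretransitive N β] : IsPretransitive (M × N) (α × β) where
  exists_smul_eq x y := by
    obtain ⟨m, hm⟩ := exists_smul_eq M x.1 y.1
    obtain ⟨n, hn⟩ := exists_smul_eq N x.2 y.2
    exact ⟨(m, n), Prod.ext hm hn⟩

end ProdAction

local notation "C₂" => Multiplicative (ZMod 2)

theorem eq_one_or_eq_ofAdd_one (u : C₂) : u = 1 ∨ u = ofAdd 1 := by
  revert u; decide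

theorem ofAdd_one_mul_ofAdd_one : (ofAdd 1 : C₂) * ofAdd 1 = 1 := by decide

namespace Hprime

variable {p : ℕ} {a b : Fin p}

theorem mk_one_mem {σ : Equiv.Perm (Fin p)} (ha : σ a = a) (hb : σ b = b) :
    (σ, (1 : C₂)) ∈ Hprime p a b :=
  Subgroup.subset_closure (Or.inl ⟨rfl, ha, hb⟩)

theorem swap_mem : (Equiv.swap a b, (ofAdd 1 : C₂)) ∈ Hprime p a b :=
  Subgroup.subset_closure (Or.inr rfl)

theorem card_orbitRel_quotient_unit_prod (a b : Fin p) :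
    Nat.card (orbitRel.Quotient (Hprime p a b) (Unit × C₂)) = 1 := by
  refine (card_orbitRel_quotient_eq_of_invariant (fun _ => ())
    (fun _ => ((), 1)) (fun _ _ => rfl) (fun _ => rfl) ?_).trans Nat.card_unique
  rintro ⟨⟨⟩, u⟩
  rcases eq_one_or_eq_ofAdd_one u with rfl | rfl
  · exact mem_orbit_self _
  · exact ⟨⟨_, swap_mem⟩, by simp⟩

variable {β : Type*} [MulAction C₂ β]

def orbitInvariant (a b : Fin p) (x : Fin p × β) : Option β :=
  if x.1 = a then some x.2 else if x.1 = b then some ((ofAdd 1 : C₂) • x.2) else none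

theorem orbitInvariant_smul (hab : a ≠ b) {g} (hg : g ∈ Hprime p a b) (x : Fin p × β) :
    orbitInvariant a b (g • x) = orbitInvariant a b x := by
  refine apply_smul_eq_of_mem_closure ?_ hg x
  rintro ⟨σ, u⟩ (⟨rfl, ha, hb⟩ | hs) ⟨w, v⟩
  · dsimp only at ha hb
    simp only [orbitInvariant, Prod.smul_mk_prod, Equiv.Perm.smul_def, one_smul]
    conv_lhs => rw [← ha, ← hb]
    simp only [σ.injective.eq_iff]
  · obtain ⟨rfl, rfl⟩ := Prod.ext_iff.1 hs
    simp only [orbitInvariant, Prod.smul_mk_prod, Equiv.Perm.smul_def, Equiv.swap_apply_def]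
    split_ifs <;> simp_all [smul_smul, ofAdd_one_mul_ofAdd_one]

theorem card_orbitRel_quotient_prod [IsPretransitive C₂ β] [Nonempty β] {z : Fin p}
    (hab : a ≠ b) (haz : a ≠ z) (hbz : b ≠ z) :
    Nat.card (orbitRel.Quotient (Hprime p a b) (Fin p × β)) = Nat.card (Option β) := by
  obtain ⟨v₀⟩ := ‹Nonempty β›
  refine card_orbitRel_quotient_eq_of_invariant (orbitInvariant a b)
    (fun o => o.elim (z, v₀) (a, ·)) (fun h x => orbitInvariant_smul hab h.2 x) ?_ ?_
  · rintro (_ | v) <;> simp [orbitInvariant, haz.symm, hbz.symm]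
  · rintro ⟨w, v⟩
    by_cases hwa : w = a
    · subst hwa
      simp only [orbitInvariant, if_true, Option.elim]
      exact mem_orbit_self _
    by_cases hwb : w = b
    · subst hwb
      simp only [orbitInvariant, hab.symm]
      exact ⟨⟨_, swap_mem⟩, by simp [smul_smul, ofAdd_one_mul_ofAdd_one]⟩
    · obtain ⟨u, rfl⟩ := exists_smul_eq C₂ v₀ v
      have hzw : (Equiv.swap z w, (1 : C₂)) ∈ Hprime p a b :=
        mk_one_mem (Equiv.swap_apply_of_ne_of_ne haz (Ne.symm hwa))
          (Equiv.swap_apply_of_ne_of_ne hbz (Ne.symm hwb))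
      simp only [orbitInvariant, hwa, hwb, if_false, Option.elim]
      rcases eq_one_or_eq_ofAdd_one u with rfl | rfl
      · exact ⟨⟨_, hzw⟩, by simp⟩
      · exact ⟨⟨_, mul_mem swap_mem hzw⟩, by simp [Equiv.swap_apply_of_ne_of_ne hwa hwb]⟩

end Hprime

/-- For `G = Sₚ × C₂`, `A₁ = Sₚ×{0}`, `A₂ = Stab(1)×C₂`, `A₃ = Stab(1)×{0}` and `H'` as above:
`#(A₁\G/H') = 1`, `#(A₂\G/H') = 2` and `#(A₃\G/H') = 3`. -/
theorem double_coset_counts_subgroups (p : ℕ) (hp : p.Prime) (hodd : Odd p)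
    (a b : Fin p) (ha : (a : ℕ) = p - 2) (hb : (b : ℕ) = p - 1) :
    Nat.card (DoubleCoset.Quotient
        (((⊤ : Subgroup (Equiv.Perm (Fin p))).prod (⊥ : Subgroup (Multiplicative (ZMod 2)))) :
            Set (Equiv.Perm (Fin p) × Multiplicative (ZMod 2)))
        ((Hprime p a b) : Set (Equiv.Perm (Fin p) × Multiplicative (ZMod 2)))) = 1 ∧
    Nat.card (DoubleCoset.Quotient
        (((MulAction.stabilizer (Equiv.Perm (Fin p)) (⟨0, hp.pos⟩ : Fin p)).prod
            (⊤ : Subgroup (Multiplicative (ZMod 2)))) :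
            Set (Equiv.Perm (Fin p) × Multiplicative (ZMod 2)))
        ((Hprime p a b) : Set (Equiv.Perm (Fin p) × Multiplicative (ZMod 2)))) = 2 ∧
    Nat.card (DoubleCoset.Quotient
        (((MulAction.stabilizer (Equiv.Perm (Fin p)) (⟨0, hp.pos⟩ : Fin p)).prod
            (⊥ : Subgroup (Multiplicative (ZMod 2)))) :
            Set (Equiv.Perm (Fin p) × Multiplicative (ZMod 2)))
        ((Hprime p a b) : Set (Equiv.Perm (Fin p) × Multiplicative (ZMod 2)))) = 3 := by
  set z : Fin p := ⟨0, hp.pos⟩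
  have hp3 : 3 ≤ p := by
    obtain ⟨k, rfl⟩ := hodd
    have := hp.two_le
    omega
  have hab : a ≠ b := Fin.ne_of_val_ne (by omega)
  have haz : a ≠ z := Fin.ne_of_val_ne (by dsimp only [z]; omega)
  have hbz : b ≠ z := Fin.ne_of_val_ne (by dsimp only [z]; omega)
  have h₁ := DoubleCoset.card_quotient_stabilizer (((), 1) : Unit × C₂) (Hprime p a b)
  have h₂ := DoubleCoset.card_quotient_stabilizer ((z, ()) : Fin p × Unit) (Hprime p a b)
  have h₃ := DoubleCoset.card_quotient_stabilizer ((z, 1) : Fin p × C₂) (Hprime p a b)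
  simp only [stabilizer_prod_mk, stabilizer_eq_top_of_subsingleton,
    IsCancelSMul.stabilizer_eq_bot] at h₁ h₂ h₃
  refine ⟨h₁.trans (Hprime.card_orbitRel_quotient_unit_prod a b), ?_, ?_⟩
  · rw [h₂, Hprime.card_orbitRel_quotient_prod hab haz hbz]
    simp
  · rw [h₃, Hprime.card_orbitRel_quotient_prod hab haz hbz]
    simp
end

section
/- Let p be an odd prime and G = Sₚ × C₂. Let V be the representation of G on {x ∈ ℚᵖ : x₁ + ⋯ + x_p = 0} given by (ρ, c)·x = (−1)ᶜ·(x_{ρ⁻¹(1)}, …, x_{ρ⁻¹(p)}). Then there is an isomorphism of ℚ[G]-modules ℚ[G/(Stab(1)×{0})] ⊕ ℚ[G/G] ≅ ℚ[G/(Sₚ×{0})] ⊕ ℚ[G/(Stab(1)×C₂)] ⊕ V, where Stab(1) = {ρ ∈ Sₚ : ρ(1) = 1}. (Equivalently, Ind_{S_{p−1}×{e}}^G 1 ≅ 1 ⊕ ε ⊕ σ ⊕ (σ⊗ε), where Ind_{Sₚ×{e}}^G 1 ≅ 1 ⊕ ε and Ind_{S_{p−1}×C₂}^G 1 ≅ 1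 ⊕ σ.) -/
/-- The zero-sum hyperplane `{x ∈ ℚᵖ : x₁ + ⋯ + x_p = 0}`. -/
def zeroSumHyperplane (p : ℕ) : Submodule ℚ (Fin p → ℚ) where
  carrier := {x | ∑ i, x i = 0}
  add_mem' := fun {a b} ha hb => by
    simp only [Set.mem_setOf_eq, Pi.add_apply] at ha hb ⊢
    simp [Finset.sum_add_distrib, ha, hb]
  zero_mem' := by simp
  smul_mem' := fun c x hx => by
    simp only [Set.mem_setOf_eq, Pi.smul_apply, smul_eq_mul] at hx ⊢
    simp [← Finset.mul_sum, hx]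

/-- The permutation representation on `H →₀ k` (Mathlib's old `Representation.ofMulAction`). -/
noncomputable def ofMulActionFinsupp (k G H : Type*) [CommSemiring k] [Monoid G] [MulAction G H] :
    Representation k G (H →₀ k) where
  toFun g := Finsupp.lmapDomain k k (g • ·)
  map_one' := by ext; simp
  map_mul' x y := by ext; simp [mul_smul]

/-!
Each permutation module `ℚ[G/H]` is the space of functions on a `G`-set whose point stabilizer
is `H`: `G/(Stab(1)×{0}) = Fin p × C₂`, `G/(Sₚ×{0}) = C₂`, `G/(Stab(1)×C₂) = Fin p`, `G/G = pt`.
A function on `Fin p × C₂` is determined by its sums over the `C₂`-fibres, which form `ℚ[Fin p]`,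
and its signed sums over them, which form `ε ⊗ ℚ[Fin p] = ε ⊕ (σ ⊗ ε)`: the mean of the signed
sums is the `ε`-coordinate, and subtracting it leaves a vector of `V`. That mean together with
the trivial summand `ℚ[G/G]` is `ℚ[C₂] ≅ 1 ⊕ ε`. Inverting this only divides by `2` and by `p`.
-/

namespace MulAction

variable {G X : Type*} [Group G] [MulAction G X] [IsPretransitive G X]

noncomputable def quotientEquivOfStabilizerEq (x : X) {H : Subgroup G} (h : stabilizer G x = H) :
    G ⧸ H ≃ X :=
  (Subgroup.quotientEquivOfEq h.symm).trans <| Equiv.ofBijective (ofQuotientStabilizer G x)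
    ⟨injective_ofQuotientStabilizer G x, fun y => by
      obtain ⟨g, rfl⟩ := exists_smul_eq G x y
      exact ⟨g, rfl⟩⟩

theorem quotientEquivOfStabilizerEq_smul (x : X) {H : Subgroup G} (h : stabilizer G x = H)
    (g : G) (q : G ⧸ H) :
    quotientEquivOfStabilizerEq x h (g • q) = g • quotientEquivOfStabilizerEq x h q := by
  induction q using QuotientGroup.induction_on with
  | H a => exact mul_smul g a x

end MulAction

namespace Finsupp

variable {k G Q X : Type*} [CommSemiring k] [Group G] [MulAction G Q] [MulAction G X] [Finite X]

noncomputable def linearEquivFunOfEquiv (e : Q ≃ X) : (Q →₀ k) ≃ₗ[k] (X → k) :=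
  Finsupp.domLCongr e ≪≫ₗ linearEquivFunOnFinite k k X

theorem linearEquivFunOfEquiv_apply (e : Q ≃ X) (v : Q →₀ k) (x : X) :
    linearEquivFunOfEquiv e v x = v (e.symm x) :=
  equivMapDomain_apply _ _ _

theorem linearEquivFunOfEquiv_ofMulActionFinsupp (e : Q ≃ X)
    (he : ∀ (g : G) q, e (g • q) = g • e q) (g : G) (v : Q →₀ k) :
    linearEquivFunOfEquiv e (ofMulActionFinsupp k G Q g v) =
      fun x => linearEquivFunOfEquiv e v (g⁻¹ • x) := by
  funext x
  have hx : e.symm x = g • e.symm (g⁻¹ • x) :=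
    e.symm_apply_eq.mpr (by rw [he, e.apply_symm_apply, smul_inv_smul])
  rw [linearEquivFunOfEquiv_apply, linearEquivFunOfEquiv_apply, hx]
  exact mapDomain_apply (MulAction.injective g) v _

theorem linearEquivFunOfEquiv_symm_smul (e : Q ≃ X)
    (he : ∀ (g : G) q, e (g • q) = g • e q) (g : G) (f : X → k) :
    (linearEquivFunOfEquiv e).symm (fun x => f (g⁻¹ • x)) =
      ofMulActionFinsupp k G Q g ((linearEquivFunOfEquiv e).symm f) := by
  rw [LinearEquiv.symm_apply_eq, linearEquivFunOfEquiv_ofMulActionFinsupp e he,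
    LinearEquiv.apply_symm_apply]

end Finsupp

local notation "C₂" => Multiplicative (ZMod 2)

namespace PermC2

open Finset MulAction
open scoped BigOperators

theorem C2_eq_one_or_eq_ofAdd_one (d : C₂) : d = 1 ∨ d = Multiplicative.ofAdd 1 := by
  revert d; decide

theorem sum_C2 {M : Type*} [AddCommMonoid M] (f : C₂ → M) :
    ∑ d, f d = f 1 + f (Multiplicative.ofAdd 1) := by
  rw [show (univ : Finset C₂) = {1, Multiplicative.ofAdd 1} by decide, sum_pair (by decide)]

theorem C2Sign_one : C2Sign 1 = 1 := rfl

theorem C2Sign_ofAdd_one : C2Sign (Multiplicative.ofAdd 1) = -1 := rfl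

theorem C2Sign_mul (c d : C₂) : C2Sign (c * d) = C2Sign c * C2Sign d := by
  rw [C2Sign, C2Sign, C2Sign, toAdd_mul, ZMod.val_add, ← pow_add, ← neg_one_pow_eq_pow_mod_two]

theorem C2Sign_inv (c : C₂) : C2Sign c⁻¹ = C2Sign c := by
  revert c; decide

theorem C2Sign_mul_self (c : C₂) : C2Sign c * C2Sign c = 1 := by
  rw [← C2Sign_mul, show c * c = 1 by revert c; decide, C2Sign_one]

section Decomposition

variable {X : Type*} {n : ℕ}

def fiberSum (a : X × C₂ → ℚ) (x : X) : ℚ := ∑ d, a (x, d)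

def fiberSignedSum (a : X × C₂ → ℚ) (x : X) : ℚ := ∑ d, C2Sign d * a (x, d)

theorem fiberSum_comp (σ : Equiv.Perm X) (c : C₂) (a : X × C₂ → ℚ) :
    fiberSum (fun y => a (σ y.1, c * y.2)) = fun x => fiberSum a (σ x) :=
  funext fun x => Equiv.sum_comp (Equiv.mulLeft c) fun d => a (σ x, d)

theorem fiberSignedSum_comp (σ : Equiv.Perm X) (c : C₂) (a : X × C₂ → ℚ) :
    fiberSignedSum (fun y => a (σ y.1, c * y.2)) = fun x => C2Sign c * fiberSignedSum a (σ x) := by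
  funext x
  rw [fiberSignedSum, fiberSignedSum, mul_sum]
  refine Fintype.sum_equiv (Equiv.mulLeft c) _ _ fun d => ?_
  rw [Equiv.coe_mulLeft, C2Sign_mul, ← mul_assoc, ← mul_assoc, C2Sign_mul_self, one_mul]

theorem sum_sub_expect {ι : Type*} [Fintype ι] (f : ι → ℚ) : ∑ i, (f i - 𝔼 j, f j) = 0 := by
  rw [sum_sub_distrib, sum_const, card_univ, Fintype.card_smul_expect, sub_self]

def zeroSumProj (f : Fin n → ℚ) : zeroSumHyperplane n :=
  ⟨fun i => f i - 𝔼 j, f j, sum_sub_expect f⟩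

theorem expect_mul_comp {ι : Type*} [Fintype ι] (σ : Equiv.Perm ι) (c : ℚ) (f : ι → ℚ) :
    𝔼 j, c * f (σ j) = c * 𝔼 j, f j := by
  rw [mul_expect]
  exact Fintype.expect_equiv σ _ _ fun j => rfl

theorem zeroSumProj_comp (σ : Equiv.Perm (Fin n)) (c : ℚ) (f : Fin n → ℚ) (i : Fin n) :
    (zeroSumProj (fun j => c * f (σ j)) : Fin n → ℚ) i =
      c * (zeroSumProj f : Fin n → ℚ) (σ i) := by
  simp only [zeroSumProj, expect_mul_comp, mul_sub]

theorem expect_zeroSumHyperplane_add_const [NeZero n] (w : zeroSumHyperplane n) (m : ℚ) :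
    𝔼 i, ((w : Fin n → ℚ) i + m) = m := by
  have hw : ∑ i, (w : Fin n → ℚ) i = 0 := w.2
  rw [expect_add_distrib, Fintype.expect_eq_sum_div_card, hw, zero_div, zero_add,
    Fintype.expect_const]

noncomputable def sumSignDecomposition (n : ℕ) [NeZero n] :
    ((Fin n × C₂ → ℚ) × (Unit → ℚ)) ≃ₗ[ℚ] ((C₂ → ℚ) × (Fin n → ℚ) × zeroSumHyperplane n) where
  toFun x := (fun d => x.2 () + C2Sign d * 𝔼 i, fiberSignedSum x.1 i,
    fiberSum x.1, zeroSumProj (fiberSignedSum x.1))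
  map_add' x y := by
    refine Prod.ext (funext fun d => ?_)
      (Prod.ext (funext fun i => ?_) (Subtype.ext (funext fun i => ?_))) <;>
    simp only [Prod.fst_add, Prod.snd_add, Pi.add_apply, fiberSum, fiberSignedSum, zeroSumProj,
      mul_add, sum_add_distrib, expect_add_distrib, Prod.mk_add_mk, AddMemClass.mk_add_mk] <;>
    ring
  map_smul' r x := by
    refine Prod.ext (funext fun d => ?_)
      (Prod.ext (funext fun i => ?_) (Subtype.ext (funext fun i => ?_))) <;>
    simp only [Prod.smul_fst, Prod.smul_snd, Pi.smul_apply, smul_eq_mul, fiberSum, fiberSignedSum,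
      zeroSumProj, Submodule.coe_smul, RingHom.id_apply, mul_left_comm _ r, ← mul_sum,
      ← mul_expect] <;> ring
  invFun y :=
    let m := (∑ d, C2Sign d * y.1 d) / 2
    (fun q => (y.2.1 q.1 + C2Sign q.2 * ((y.2.2 : Fin n → ℚ) q.1 + m)) / 2,
      fun _ => (∑ d, y.1 d) / 2)
  left_inv := by
    rintro ⟨a, t⟩
    refine Prod.ext (funext fun ⟨i, d⟩ => ?_) (funext fun ⟨⟩ => ?_)
    · rcases C2_eq_one_or_eq_ofAdd_one d with rfl | rfl <;>
        simp only [fiberSum, fiberSignedSum, zeroSumProj, sum_C2, C2Sign_one, C2Sign_ofAdd_one] <;>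
        ring
    · simp only [sum_C2, C2Sign_one, C2Sign_ofAdd_one]
      ring
  right_inv := by
    rintro ⟨b, u, w⟩
    set m := (∑ d, C2Sign d * b d) / 2
    have hS : fiberSignedSum (fun q => (u q.1 + C2Sign q.2 * ((w : Fin n → ℚ) q.1 + m)) / 2) =
        fun i => (w : Fin n → ℚ) i + m := by
      funext i
      simp only [fiberSignedSum, sum_C2, C2Sign_one, C2Sign_ofAdd_one]
      ring
    refine Prod.ext (funext fun d => ?_)
      (Prod.ext (funext fun i => ?_) (Subtype.ext (funext fun i => ?_)))
    · dsimp only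
      rw [hS, expect_zeroSumHyperplane_add_const]
      rcases C2_eq_one_or_eq_ofAdd_one d with rfl | rfl <;>
        simp only [m, sum_C2, C2Sign_one, C2Sign_ofAdd_one] <;> ring
    · simp only [fiberSum, sum_C2, C2Sign_one, C2Sign_ofAdd_one]
      ring
    · dsimp only [zeroSumProj]
      rw [hS, expect_zeroSumHyperplane_add_const, add_sub_cancel_right]

variable [NeZero n] (σ : Equiv.Perm (Fin n)) (c : C₂) (a : Fin n × C₂ → ℚ) (t : Unit → ℚ)

theorem sumSignDecomposition_fst_comp :
    (sumSignDecomposition n (fun y => a (σ y.1, c * y.2), t)).1 =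
      fun d => (sumSignDecomposition n (a, t)).1 (c * d) := by
  funext d
  change t () + C2Sign d * 𝔼 i, fiberSignedSum _ i =
    t () + C2Sign (c * d) * 𝔼 i, fiberSignedSum a i
  simp only [fiberSignedSum_comp, expect_mul_comp, C2Sign_mul]
  ring

theorem sumSignDecomposition_snd_fst_comp :
    (sumSignDecomposition n (fun y => a (σ y.1, c * y.2), t)).2.1 =
      fun i => (sumSignDecomposition n (a, t)).2.1 (σ i) :=
  fiberSum_comp σ c a

theorem sumSignDecomposition_snd_snd_comp :
    ((sumSignDecomposition n (fun y => a (σ y.1, c * y.2), t)).2.2 : Fin n → ℚ) =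
      fun i => C2Sign c * ((sumSignDecomposition n (a, t)).2.2 : Fin n → ℚ) (σ i) := by
  funext i
  change ((zeroSumProj (fiberSignedSum fun y => a (σ y.1, c * y.2)) : zeroSumHyperplane n) :
    Fin n → ℚ) i = _
  simp only [fiberSignedSum_comp, zeroSumProj_comp]
  rfl

end Decomposition

section Action

variable {n : ℕ}

instance : MulAction (Equiv.Perm (Fin n) × C₂) (Fin n) := MulAction.compHom _ (MonoidHom.fst _ _)

instance : MulAction (Equiv.Perm (Fin n) × C₂) C₂ := MulAction.compHom _ (MonoidHom.snd _ _)

theorem smul_fin (g : Equiv.Perm (Fin n) × C₂) (i : Fin n) : g • i = g.1 i := rfl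

theorem smul_C2 (g : Equiv.Perm (Fin n) × C₂) (d : C₂) : g • d = g.2 * d := rfl

instance : IsPretransitive (Equiv.Perm (Fin n) × C₂) (Fin n) :=
  ⟨fun i j => ⟨(Equiv.swap i j, 1), by simp [smul_fin]⟩⟩

instance : IsPretransitive (Equiv.Perm (Fin n) × C₂) C₂ :=
  ⟨fun c d => ⟨(1, d * c⁻¹), by simp [smul_C2]⟩⟩

instance : IsPretransitive (Equiv.Perm (Fin n) × C₂) (Fin n × C₂) :=
  ⟨fun x y => ⟨(Equiv.swap x.1 y.1, y.2 * x.2⁻¹), by ext <;> simp [smul_fin, smul_C2]⟩⟩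

theorem stabilizer_fin (z : Fin n) :
    stabilizer (Equiv.Perm (Fin n) × C₂) z = (stabilizer (Equiv.Perm (Fin n)) z).prod ⊤ := by
  ext g; simp [Subgroup.mem_prod, smul_fin, Equiv.Perm.smul_def]

theorem stabilizer_C2_one (n : ℕ) :
    stabilizer (Equiv.Perm (Fin n) × C₂) (1 : C₂) = (⊤ : Subgroup (Equiv.Perm (Fin n))).prod ⊥ := by
  ext g; simp [Subgroup.mem_prod, smul_C2]

theorem stabilizer_fin_C2 (z : Fin n) :
    stabilizer (Equiv.Perm (Fin n) × C₂) (z, (1 : C₂)) =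
      (stabilizer (Equiv.Perm (Fin n)) z).prod ⊥ := by
  ext g; simp [Subgroup.mem_prod, smul_fin, smul_C2, Equiv.Perm.smul_def]

theorem stabilizer_unit (n : ℕ) : stabilizer (Equiv.Perm (Fin n) × C₂) () = ⊤ := by
  ext g; simp

end Action

end PermC2

open PermC2 MulAction Finsupp in
theorem induced_rep_decomposition_Sp_times_C2_general (p : ℕ) (z : Fin p) :
    ∃ e : ((((Equiv.Perm (Fin p) × Multiplicative (ZMod 2)) ⧸
              (MulAction.stabilizer (Equiv.Perm (Fin p)) z).prod
                (⊥ : Subgroup (Multiplicative (ZMod 2)))) →₀ ℚ) ×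
            (((Equiv.Perm (Fin p) × Multiplicative (ZMod 2)) ⧸
              (⊤ : Subgroup (Equiv.Perm (Fin p) × Multiplicative (ZMod 2)))) →₀ ℚ)) ≃ₗ[ℚ]
          ((((Equiv.Perm (Fin p) × Multiplicative (ZMod 2)) ⧸
              (⊤ : Subgroup (Equiv.Perm (Fin p))).prod
                (⊥ : Subgroup (Multiplicative (ZMod 2)))) →₀ ℚ) ×
            (((Equiv.Perm (Fin p) × Multiplicative (ZMod 2)) ⧸
              (MulAction.stabilizer (Equiv.Perm (Fin p)) z).prod
                (⊤ : Subgroup (Multiplicative (ZMod 2)))) →₀ ℚ) ×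
            zeroSumHyperplane p),
      ∀ (g : Equiv.Perm (Fin p) × Multiplicative (ZMod 2)) v,
        (e (ofMulActionFinsupp ℚ (Equiv.Perm (Fin p) × Multiplicative (ZMod 2))
              ((Equiv.Perm (Fin p) × Multiplicative (ZMod 2)) ⧸
                (MulAction.stabilizer (Equiv.Perm (Fin p)) z).prod
                  (⊥ : Subgroup (Multiplicative (ZMod 2)))) g v.1,
            ofMulActionFinsupp ℚ (Equiv.Perm (Fin p) × Multiplicative (ZMod 2))
              ((Equiv.Perm (Fin p) × Multiplicative (ZMod 2)) ⧸
                (⊤ : Subgroup (Equiv.Perm (Fin p) × Multiplicative (ZMod 2)))) g v.2)).1 =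
          ofMulActionFinsupp ℚ (Equiv.Perm (Fin p) × Multiplicative (ZMod 2))
             ((Equiv.Perm (Fin p) × Multiplicative (ZMod 2)) ⧸
               (⊤ : Subgroup (Equiv.Perm (Fin p))).prod
                 (⊥ : Subgroup (Multiplicative (ZMod 2)))) g (e v).1 ∧
        (e (ofMulActionFinsupp ℚ (Equiv.Perm (Fin p) × Multiplicative (ZMod 2))
              ((Equiv.Perm (Fin p) × Multiplicative (ZMod 2)) ⧸
                (MulAction.stabilizer (Equiv.Perm (Fin p)) z).prod
                  (⊥ : Subgroup (Multiplicative (ZMod 2)))) g v.1,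
            ofMulActionFinsupp ℚ (Equiv.Perm (Fin p) × Multiplicative (ZMod 2))
              ((Equiv.Perm (Fin p) × Multiplicative (ZMod 2)) ⧸
                (⊤ : Subgroup (Equiv.Perm (Fin p) × Multiplicative (ZMod 2)))) g v.2)).2.1 =
          ofMulActionFinsupp ℚ (Equiv.Perm (Fin p) × Multiplicative (ZMod 2))
             ((Equiv.Perm (Fin p) × Multiplicative (ZMod 2)) ⧸
               (MulAction.stabilizer (Equiv.Perm (Fin p)) z).prod
                 (⊤ : Subgroup (Multiplicative (ZMod 2)))) g (e v).2.1 ∧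
        (((e (ofMulActionFinsupp ℚ (Equiv.Perm (Fin p) × Multiplicative (ZMod 2))
              ((Equiv.Perm (Fin p) × Multiplicative (ZMod 2)) ⧸
                (MulAction.stabilizer (Equiv.Perm (Fin p)) z).prod
                  (⊥ : Subgroup (Multiplicative (ZMod 2)))) g v.1,
            ofMulActionFinsupp ℚ (Equiv.Perm (Fin p) × Multiplicative (ZMod 2))
              ((Equiv.Perm (Fin p) × Multiplicative (ZMod 2)) ⧸
                (⊤ : Subgroup (Equiv.Perm (Fin p) × Multiplicative (ZMod 2)))) g v.2)).2.2 :
            Fin p → ℚ) =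
          fun i => C2Sign g.2 * ((e v).2.2 : Fin p → ℚ) (g.1⁻¹ i)) := by
  have : NeZero p := NeZero.of_pos z.pos
  let e₃ := linearEquivFunOfEquiv (k := ℚ) (quotientEquivOfStabilizerEq _ (stabilizer_fin_C2 z))
  let e₀ := linearEquivFunOfEquiv (k := ℚ) (quotientEquivOfStabilizerEq () (stabilizer_unit p))
  let e₁ := linearEquivFunOfEquiv (k := ℚ) (quotientEquivOfStabilizerEq _ (stabilizer_C2_one p))
  let e₂ := linearEquivFunOfEquiv (k := ℚ) (quotientEquivOfStabilizerEq z (stabilizer_fin z))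
  refine ⟨e₃.prodCongr e₀ ≪≫ₗ sumSignDecomposition p ≪≫ₗ
    e₁.symm.prodCongr (e₂.symm.prodCongr (LinearEquiv.refl ℚ _)), fun g v => ?_⟩
  have h₃ : e₃ (ofMulActionFinsupp _ _ _ g v.1) = fun y => e₃ v.1 (g.1⁻¹ y.1, g.2⁻¹ * y.2) :=
    linearEquivFunOfEquiv_ofMulActionFinsupp _ (quotientEquivOfStabilizerEq_smul _ _) g v.1
  have h₀ : e₀ (ofMulActionFinsupp _ _ _ g v.2) = e₀ v.2 :=
    linearEquivFunOfEquiv_ofMulActionFinsupp _ (quotientEquivOfStabilizerEq_smul _ _) g v.2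
  simp only [LinearEquiv.trans_apply, LinearEquiv.prodCongr_apply, LinearEquiv.refl_apply, h₃, h₀]
  refine ⟨?_, ?_, ?_⟩
  · rw [sumSignDecomposition_fst_comp]
    exact linearEquivFunOfEquiv_symm_smul _ (quotientEquivOfStabilizerEq_smul _ _) g _
  · rw [sumSignDecomposition_snd_fst_comp]
    exact linearEquivFunOfEquiv_symm_smul _ (quotientEquivOfStabilizerEq_smul _ _) g _
  · rw [sumSignDecomposition_snd_snd_comp, C2Sign_inv]

/-- For `G = Sₚ × C₂`, with `A₁ = Sₚ×{0}`, `A₂ = Stab(1)×C₂`, `A₃ = Stab(1)×{0}` and `V` the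
zero-sum hyperplane of `ℚᵖ` with action `(ρ,c)·x = (−1)ᶜ·(x∘ρ⁻¹)` (realizing `σ⊗ε`), there is
an isomorphism of `ℚ[G]`-modules `ℚ[G/A₃] ⊕ ℚ[G/G] ≅ ℚ[G/A₁] ⊕ ℚ[G/A₂] ⊕ V`. -/
theorem induced_rep_decomposition_Sp_times_C2 (p : ℕ) (hp : p.Prime) (hodd : Odd p)
    (z : Fin p) (hz : (z : ℕ) = 0) :
    ∃ e : ((((Equiv.Perm (Fin p) × Multiplicative (ZMod 2)) ⧸
              (MulAction.stabilizer (Equiv.Perm (Fin p)) z).prod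
                (⊥ : Subgroup (Multiplicative (ZMod 2)))) →₀ ℚ) ×
            (((Equiv.Perm (Fin p) × Multiplicative (ZMod 2)) ⧸
              (⊤ : Subgroup (Equiv.Perm (Fin p) × Multiplicative (ZMod 2)))) →₀ ℚ)) ≃ₗ[ℚ]
          ((((Equiv.Perm (Fin p) × Multiplicative (ZMod 2)) ⧸
              (⊤ : Subgroup (Equiv.Perm (Fin p))).prod
                (⊥ : Subgroup (Multiplicative (ZMod 2)))) →₀ ℚ) ×
            (((Equiv.Perm (Fin p) × Multiplicative (ZMod 2)) ⧸
              (MulAction.stabilizer (Equiv.Perm (Fin p)) z).prod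
                (⊤ : Subgroup (Multiplicative (ZMod 2)))) →₀ ℚ) ×
            zeroSumHyperplane p),
      ∀ (g : Equiv.Perm (Fin p) × Multiplicative (ZMod 2)) v,
        (e (ofMulActionFinsupp ℚ (Equiv.Perm (Fin p) × Multiplicative (ZMod 2))
              ((Equiv.Perm (Fin p) × Multiplicative (ZMod 2)) ⧸
                (MulAction.stabilizer (Equiv.Perm (Fin p)) z).prod
                  (⊥ : Subgroup (Multiplicative (ZMod 2)))) g v.1,
            ofMulActionFinsupp ℚ (Equiv.Perm (Fin p) × Multiplicative (ZMod 2))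
              ((Equiv.Perm (Fin p) × Multiplicative (ZMod 2)) ⧸
                (⊤ : Subgroup (Equiv.Perm (Fin p) × Multiplicative (ZMod 2)))) g v.2)).1 =
          ofMulActionFinsupp ℚ (Equiv.Perm (Fin p) × Multiplicative (ZMod 2))
             ((Equiv.Perm (Fin p) × Multiplicative (ZMod 2)) ⧸
               (⊤ : Subgroup (Equiv.Perm (Fin p))).prod
                 (⊥ : Subgroup (Multiplicative (ZMod 2)))) g (e v).1 ∧
        (e (ofMulActionFinsupp ℚ (Equiv.Perm (Fin p) × Multiplicative (ZMod 2))
              ((Equiv.Perm (Fin p) × Multiplicative (ZMod 2)) ⧸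
                (MulAction.stabilizer (Equiv.Perm (Fin p)) z).prod
                  (⊥ : Subgroup (Multiplicative (ZMod 2)))) g v.1,
            ofMulActionFinsupp ℚ (Equiv.Perm (Fin p) × Multiplicative (ZMod 2))
              ((Equiv.Perm (Fin p) × Multiplicative (ZMod 2)) ⧸
                (⊤ : Subgroup (Equiv.Perm (Fin p) × Multiplicative (ZMod 2)))) g v.2)).2.1 =
          ofMulActionFinsupp ℚ (Equiv.Perm (Fin p) × Multiplicative (ZMod 2))
             ((Equiv.Perm (Fin p) × Multiplicative (ZMod 2)) ⧸
               (MulAction.stabilizer (Equiv.Perm (Fin p)) z).prod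
                 (⊤ : Subgroup (Multiplicative (ZMod 2)))) g (e v).2.1 ∧
        (((e (ofMulActionFinsupp ℚ (Equiv.Perm (Fin p) × Multiplicative (ZMod 2))
              ((Equiv.Perm (Fin p) × Multiplicative (ZMod 2)) ⧸
                (MulAction.stabilizer (Equiv.Perm (Fin p)) z).prod
                  (⊥ : Subgroup (Multiplicative (ZMod 2)))) g v.1,
            ofMulActionFinsupp ℚ (Equiv.Perm (Fin p) × Multiplicative (ZMod 2))
              ((Equiv.Perm (Fin p) × Multiplicative (ZMod 2)) ⧸
                (⊤ : Subgroup (Equiv.Perm (Fin p) × Multiplicative (ZMod 2)))) g v.2)).2.2 :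
            Fin p → ℚ) =
          fun i => C2Sign g.2 * ((e v).2.2 : Fin p → ℚ) (g.1⁻¹ i)) :=
  induced_rep_decomposition_Sp_times_C2_general p z
end
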